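/- arXiv:1712.01730 — 11 statements merged into one kernel-verified Lean document; each statement's English description precedes it below -/
import Mathlib

section
/- For a Hankel determinant H^m_n = det(c_{i+j+m})_{0≤i,j≤n-1} of a doubly-indexed sequence, the identity \hat{H}_{2n} = H^0_n · H^1_n holds, where \hat{H}_k = det(s_{i+j})_{0≤i,j≤k-1} for the sequence s with s_{2j} = c_j and s_{2j+1} = 0 (all odd moments zero). -/
/-- The interleaving equivalence sending `inl i ↦ 2i` and `inr i ↦ 2i+1`. -/
def evenOddEquiv (n : ℕ) : Fin n ⊕ Fin n ≃ Fin (2 * n) where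
  toFun x := match x with
    | .inl i => ⟨2 * i.val, by omega⟩
    | .inr i => ⟨2 * i.val + 1, by omega⟩
  invFun k :=
    if h : k.val % 2 = 0 then .inl ⟨k.val / 2, by omega⟩
    else .inr ⟨k.val / 2, by omega⟩
  left_inv x := by
    cases x with
    | inl i =>
        dsimp only
        rw [dif_pos (by omega)]
        exact congrArg Sum.inl (Fin.ext (by show 2 * i.val / 2 = i.val; omega))
    | inr i =>
        dsimp only
        rw [dif_neg (by omega)]
        exact congrArg Sum.inr (Fin.ext (by show (2 * i.val + 1) / 2 = i.val; omega))
  right_inv k := by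
    by_cases h : k.val % 2 = 0
    · dsimp only
      rw [dif_pos h]
      exact Fin.ext (by show 2 * (k.val / 2) = k.val; omega)
    · dsimp only
      rw [dif_neg h]
      exact Fin.ext (by show 2 * (k.val / 2) + 1 = k.val; omega)

/-- For a sequence `s` with vanishing odd moments, the even-size Hankel determinant
factorizes: `Ĥ_{2n} = H⁰_n · H¹_n`, where `c_j = s_{2j}`. -/
theorem hankel_even_factorization (s : ℕ → ℝ) (hodd : ∀ j, s (2 * j + 1) = 0) (n : ℕ) :
    (Matrix.of fun i j : Fin (2 * n) => s (i.val + j.val)).det =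
      (Matrix.of fun i j : Fin n => s (2 * (i.val + j.val))).det *
      (Matrix.of fun i j : Fin n => s (2 * (i.val + j.val + 1))).det := by
  set M : Matrix (Fin (2 * n)) (Fin (2 * n)) ℝ :=
    Matrix.of fun i j : Fin (2 * n) => s (i.val + j.val) with hM
  have key : M.submatrix (evenOddEquiv n) (evenOddEquiv n) =
      Matrix.fromBlocks
        (Matrix.of fun i j : Fin n => s (2 * (i.val + j.val)))
        0 0
        (Matrix.of fun i j : Fin n => s (2 * (i.val + j.val + 1))) := by
    ext i j
    cases i with
    | inl i =>
        cases j with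
        | inl j =>
            simp [hM, evenOddEquiv, Matrix.submatrix, Matrix.fromBlocks]
            ring_nf
        | inr j =>
            simp only [hM, evenOddEquiv, Matrix.submatrix_apply, Equiv.coe_fn_mk,
              Matrix.of_apply, Matrix.fromBlocks_apply₁₂, Matrix.zero_apply]
            have : 2 * i.val + (2 * j.val + 1) = 2 * (i.val + j.val) + 1 := by ring
            rw [this, hodd]
    | inr i =>
        cases j with
        | inl j =>
            simp only [hM, evenOddEquiv, Matrix.submatrix_apply, Equiv.coe_fn_mk,
              Matrix.of_apply, Matrix.fromBlocks_apply₂₁, Matrix.zero_apply]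
            have : 2 * i.val + 1 + 2 * j.val = 2 * (i.val + j.val) + 1 := by ring
            rw [this, hodd]
        | inr j =>
            simp [hM, evenOddEquiv, Matrix.submatrix, Matrix.fromBlocks]
            ring_nf
  calc M.det = (M.submatrix (evenOddEquiv n) (evenOddEquiv n)).det :=
        (Matrix.det_submatrix_equiv_self _ _).symm
    _ = _ := by rw [key, Matrix.det_fromBlocks_zero₂₁]
end

section
/- For a sequence with vanishing odd moments, the odd-size Hankel determinant factorizes as \hat{H}_{2n+1} = H^0_{n+1} · H^1_n. -/
/-!
Listing the even indices `0, 2, …, 2n` before the odd ones `1, 3, …, 2n - 1` is a simultaneous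
permutation of the rows and columns of the Hankel matrix `(s (i + j))`, so it does not change
the determinant. An entry whose row and column indices have different parity is an odd moment,
hence zero, so the permuted matrix is block diagonal, with blocks `(s (2 (i + j)))` and
`(s (2 (i + j + 1)))`.
-/

def Matrix.hankel {R : Type*} (s : ℕ → R) (m : ℕ) : Matrix (Fin m) (Fin m) R :=
  Matrix.of fun i j => s (i.val + j.val)

def finSumFinEquivEvenOdd (n : ℕ) : Fin (n + 1) ⊕ Fin n ≃ Fin (2 * n + 1) where
  toFun := Sum.elim (fun i => ⟨2 * i.val, by omega⟩) (fun j => ⟨2 * j.val + 1, by omega⟩)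
  invFun k :=
    if h : k.val % 2 = 0 then Sum.inl ⟨k.val / 2, by omega⟩ else Sum.inr ⟨k.val / 2, by omega⟩
  left_inv := by
    rintro (i | j) <;> simp [Fin.ext_iff]; omega
  right_inv k := by
    by_cases h : k.val % 2 = 0 <;> simp [h, Fin.ext_iff] <;> omega

theorem Matrix.hankel_submatrix_finSumFinEquivEvenOdd {R : Type*} [Zero R] (s : ℕ → R)
    (hodd : ∀ j, s (2 * j + 1) = 0) (n : ℕ) :
    (hankel s (2 * n + 1)).submatrix (finSumFinEquivEvenOdd n) (finSumFinEquivEvenOdd n) =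
      fromBlocks (hankel (fun k => s (2 * k)) (n + 1)) 0 0
        (hankel (fun k => s (2 * (k + 1))) n) := by
  ext (i | i) (j | j) <;> simp only [hankel, finSumFinEquivEvenOdd, Equiv.coe_fn_mk,
    submatrix_apply, of_apply, Sum.elim_inl, Sum.elim_inr, fromBlocks_apply₁₁,
    fromBlocks_apply₁₂, fromBlocks_apply₂₁, fromBlocks_apply₂₂, zero_apply]
  · ring_nf
  · rw [show 2 * i.val + (2 * j.val + 1) = 2 * (i.val + j.val) + 1 by ring, hodd]
  · rw [show 2 * i.val + 1 + 2 * j.val = 2 * (i.val + j.val) + 1 by ring, hodd]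
  · ring_nf

theorem Matrix.det_hankel_two_mul_add_one {R : Type*} [CommRing R] (s : ℕ → R)
    (hodd : ∀ j, s (2 * j + 1) = 0) (n : ℕ) :
    (hankel s (2 * n + 1)).det =
      (hankel (fun k => s (2 * k)) (n + 1)).det * (hankel (fun k => s (2 * (k + 1))) n).det := by
  rw [← det_submatrix_equiv_self (finSumFinEquivEvenOdd n),
    hankel_submatrix_finSumFinEquivEvenOdd s hodd, det_fromBlocks_zero₂₁]

/-- For a sequence `s` with vanishing odd moments, the odd-size Hankel determinant
factorizes: `Ĥ_{2n+1} = H⁰_{n+1} · H¹_n`, where `c_j = s_{2j}`. -/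
theorem hankel_odd_factorization (s : ℕ → ℝ) (hodd : ∀ j, s (2 * j + 1) = 0) (n : ℕ) :
    (Matrix.of fun i j : Fin (2 * n + 1) => s (i.val + j.val)).det =
      (Matrix.of fun i j : Fin (n + 1) => s (2 * (i.val + j.val))).det *
      (Matrix.of fun i j : Fin n => s (2 * (i.val + j.val + 1))).det :=
  Matrix.det_hankel_two_mul_add_one s hodd n
end

section
/- Jacobi's determinant identity: for an n×n matrix M (n ≥ 2) with determinant D, and row indices i₁ < i₂, column indices j₁ < j₂, one has D · D[i₁,i₂;j₁,j₂] = D[i₁;j₁]·D[i₂;j₂] − D[i₁;j₂]·D[i₂;j₁], where D[...;...] denotes the minor obtained by deleting the listed rows and columns. -/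
/-!
Let `X` be the identity matrix with rows `i₁, i₂` replaced by rows `j₁, j₂` of `adj M`. Since
`adj M * M = det M • 1`, the product `X * M` is `M` with rows `i₁, i₂` replaced by `det M` times
the unit rows `e_{j₁}, e_{j₂}`. Taking determinants gives
`det M * (2 × 2 minor of adj M) = det M ^ 2 * det (M with rows i₁, i₂ replaced by e_{j₁}, e_{j₂})`,
and `det M` can be cancelled: for the generic matrix over `ℤ[x_{ij}]` it is a nonzero divisor,
and every `M` is a specialization of the generic matrix. Cofactor expansion then turns both sides
into the minors of the statement.
-/

open Matrix

namespace Matrix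

section General

variable {n : Type*} [Fintype n] [DecidableEq n] {R : Type*} [CommRing R]

theorem det_one_updateRow_updateRow {i₁ i₂ : n} (h : i₁ ≠ i₂) (u v : n → R) :
    (((1 : Matrix n n R).updateRow i₁ u).updateRow i₂ v).det = u i₁ * v i₂ - u i₂ * v i₁ := by
  -- With `E` the columns `i₁, i₂` of `1` and `W` the rows `u, v`, the matrix is `1 + E (W - Eᵀ)`,
  -- so by Weinstein–Aronszajn its determinant is `det (1 + (W - Eᵀ) E) = det (W E)`.
  let E : Matrix n (Fin 2) R := (1 : Matrix n n R).submatrix id ![i₁, i₂]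
  have hX : ((1 : Matrix n n R).updateRow i₁ u).updateRow i₂ v =
      1 + E * (of ![u, v] - (1 : Matrix n n R).submatrix ![i₁, i₂] id) := by
    ext k q
    simp only [E, add_apply, mul_apply, Fin.sum_univ_two, updateRow_apply, submatrix_apply,
      sub_apply, of_apply, id, one_apply, cons_val_zero, cons_val_one, ite_mul, one_mul, zero_mul]
    split_ifs <;> simp_all
  have hEE : (1 : Matrix n n R).submatrix ![i₁, i₂] id * E = 1 := by
    rw [← submatrix_mul _ _ _ _ _ Function.bijective_id, mul_one,
      submatrix_one _ (by simpa [Function.Injective, Fin.forall_fin_two] using ⟨h, h.symm⟩)]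
  have hWE : of ![u, v] * E = (of ![u, v]).submatrix id ![i₁, i₂] :=
    mul_submatrix_one (Equiv.refl n) _ _
  rw [hX, det_one_add_mul_comm, Matrix.sub_mul, hEE, add_sub_cancel, hWE, det_fin_two]
  simp

theorem one_updateRow_updateRow_adjugate_mul (M : Matrix n n R) (i₁ i₂ j₁ j₂ : n) :
    ((1 : Matrix n n R).updateRow i₁ (adjugate M j₁)).updateRow i₂ (adjugate M j₂) * M =
      (M.updateRow i₁ (M.det • Pi.single j₁ 1)).updateRow i₂ (M.det • Pi.single j₂ 1) := by
  have hrow (j : n) : adjugate M j ᵥ* M = M.det • Pi.single j 1 := by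
    ext k
    rw [← mul_apply_eq_vecMul, adjugate_mul, smul_apply, Pi.smul_apply, one_eq_pi_single]
  rw [updateRow_mul, updateRow_mul, one_mul, hrow, hrow]

theorem det_mul_adjugate_two_minor (M : Matrix n n R) {i₁ i₂ : n} (h : i₁ ≠ i₂) (j₁ j₂ : n) :
    M.det * (adjugate M j₁ i₁ * adjugate M j₂ i₂ - adjugate M j₁ i₂ * adjugate M j₂ i₁) =
      M.det * (M.det * ((M.updateRow i₁ (Pi.single j₁ 1)).updateRow i₂ (Pi.single j₂ 1)).det) := by
  rw [← det_one_updateRow_updateRow h, mul_comm, ← det_mul, one_updateRow_updateRow_adjugate_mul,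
    det_updateRow_smul, updateRow_comm _ h, det_updateRow_smul, updateRow_comm _ h.symm]

theorem adjugate_two_minor (M : Matrix n n R) {i₁ i₂ : n} (h : i₁ ≠ i₂) (j₁ j₂ : n) :
    adjugate M j₁ i₁ * adjugate M j₂ i₂ - adjugate M j₁ i₂ * adjugate M j₂ i₁ =
      M.det * ((M.updateRow i₁ (Pi.single j₁ 1)).updateRow i₂ (Pi.single j₂ 1)).det := by
  let A := mvPolynomialX n n ℤ
  let φ := MvPolynomial.aeval (R := ℤ) fun p : n × n => M p.1 p.2
  have hA := mul_left_cancel₀ (det_mvPolynomialX_ne_zero n ℤ) (det_mul_adjugate_two_minor A h j₁ j₂)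
  have hM : φ.mapMatrix A = M := mvPolynomialX_mapMatrix_aeval ℤ M
  have hadj (j i : n) : φ (adjugate A j i) = adjugate M j i := by
    rw [← hM, ← AlgHom.map_adjugate]
    rfl
  have hsingle (j : n) : φ ∘ Pi.single j 1 = Pi.single j 1 := by
    ext k
    rcases eq_or_ne k j with rfl | hk <;> simp [*]
  have hdet : φ ((A.updateRow i₁ (Pi.single j₁ 1)).updateRow i₂ (Pi.single j₂ 1)).det =
      ((M.updateRow i₁ (Pi.single j₁ 1)).updateRow i₂ (Pi.single j₂ 1)).det := by
    rw [AlgHom.map_det, AlgHom.mapMatrix_apply, map_updateRow, map_updateRow, hsingle, hsingle,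
      ← AlgHom.mapMatrix_apply, hM]
  have := congrArg φ hA
  rwa [map_sub, map_mul, map_mul, map_mul, hadj, hadj, hadj, hadj, hdet, AlgHom.map_det, hM] at this

end General

theorem submatrix_updateRow_of_injective {l m n o α : Type*} [DecidableEq l] [DecidableEq m]
    (A : Matrix m n α) {f : l → m} (hf : f.Injective) (a : l) (v : n → α) (g : o → n) :
    (A.updateRow (f a) v).submatrix f g = (A.submatrix f g).updateRow a (v ∘ g) := by
  ext k q
  simp [updateRow_apply, hf.eq_iff]

section Fin

variable {R : Type*} [CommRing R] {n : ℕ}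

theorem det_updateRow_single_eq_det_submatrix (A : Matrix (Fin (n + 1)) (Fin (n + 1)) R)
    (i j : Fin (n + 1)) :
    (A.updateRow i (Pi.single j 1)).det =
      (-1) ^ (i + j : ℕ) * (A.submatrix i.succAbove j.succAbove).det := by
  rw [← adjugate_apply, adjugate_fin_succ_eq_det_submatrix]

theorem det_updateRow_single_updateRow_single_eq_det_submatrix
    (A : Matrix (Fin (n + 2)) (Fin (n + 2)) R) (i₂ j₂ : Fin (n + 2)) (i₁ j₁ : Fin (n + 1)) :
    ((A.updateRow (i₂.succAbove i₁) (Pi.single (j₂.succAbove j₁) 1)).updateRow i₂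
        (Pi.single j₂ 1)).det =
      (-1) ^ (i₁ + j₁ + (i₂ + j₂) : ℕ) *
        (A.submatrix (i₂.succAbove ∘ i₁.succAbove) (j₂.succAbove ∘ j₁.succAbove)).det := by
  have hsingle : Pi.single (j₂.succAbove j₁) (1 : R) ∘ j₂.succAbove = Pi.single j₁ 1 :=
    Function.update_comp_eq_of_injective _ Fin.succAbove_right_injective _ _
  rw [det_updateRow_single_eq_det_submatrix,
    submatrix_updateRow_of_injective _ Fin.succAbove_right_injective, hsingle,
    det_updateRow_single_eq_det_submatrix, submatrix_submatrix, pow_add]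
  ring

end Fin

end Matrix

/-- Jacobi's determinant identity: for an `n×n` matrix `M` (`n ≥ 2`), with rows
`i₁ < i₂` and columns `j₁ < j₂`,
`D · D[i₁,i₂;j₁,j₂] = D[i₁;j₁]·D[i₂;j₂] − D[i₁;j₂]·D[i₂;j₁]`,
where minors are obtained by deleting the listed rows and columns. -/
theorem jacobi_determinant_identity {R : Type*} [CommRing R] {n : ℕ}
    (M : Matrix (Fin (n + 2)) (Fin (n + 2)) R)
    (i₁ i₂ j₁ j₂ : Fin (n + 2)) (hi : i₁.val < i₂.val) (hj : j₁.val < j₂.val) :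
    M.det *
      (M.submatrix
        (fun k : Fin n => i₂.succAbove
          ((⟨i₁.val, by have := i₂.isLt; omega⟩ : Fin (n + 1)).succAbove k))
        (fun k : Fin n => j₂.succAbove
          ((⟨j₁.val, by have := j₂.isLt; omega⟩ : Fin (n + 1)).succAbove k))).det =
      (M.submatrix i₁.succAbove j₁.succAbove).det *
        (M.submatrix i₂.succAbove j₂.succAbove).det -
      (M.submatrix i₁.succAbove j₂.succAbove).det *
        (M.submatrix i₂.succAbove j₁.succAbove).det := by
  have hi₁ : i₂.succAbove ⟨i₁.val, by have := i₂.isLt; omega⟩ = i₁ :=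
    (Fin.succAbove_of_castSucc_lt _ _ hi).trans (Fin.ext rfl)
  have hj₁ : j₂.succAbove ⟨j₁.val, by have := j₂.isLt; omega⟩ = j₁ :=
    (Fin.succAbove_of_castSucc_lt _ _ hj).trans (Fin.ext rfl)
  have hcomplement := det_updateRow_single_updateRow_single_eq_det_submatrix M i₂ j₂
    ⟨i₁.val, by have := i₂.isLt; omega⟩ ⟨j₁.val, by have := j₂.isLt; omega⟩
  rw [hi₁, hj₁, Function.comp_def, Function.comp_def] at hcomplement
  have key := adjugate_two_minor M (Fin.ne_of_lt hi) j₁ j₂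
  rw [hcomplement, adjugate_fin_succ_eq_det_submatrix, adjugate_fin_succ_eq_det_submatrix,
    adjugate_fin_succ_eq_det_submatrix, adjugate_fin_succ_eq_det_submatrix] at key
  refine ((isUnit_neg_one (α := R)).pow (i₁ + j₁ + (i₂ + j₂) : ℕ)).mul_left_cancel ?_
  linear_combination -key
end

section
/- For Hankel determinants built from a sequence c : ℕ → ℝ, the identity G^0_n H^1_{n-1} − G^1_{n-1} H^0_n − H^0_{n-1} H^1_n = 0 holds for all n ≥ 1. -/
/-- Hankel determinant `H^m_n = det(c_{i+j+m})`. -/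
noncomputable def Hk (c : ℕ → ℝ) (m n : ℕ) : ℝ :=
  (Matrix.of fun i j : Fin n => c (i.val + j.val + m)).det

/-- `G^m_n`: the Hankel determinant `H^m_n` with its last row
`(c_{m+n-1},…,c_{m+2n-2})` replaced by `(c_{m+n},…,c_{m+2n-1})`;
by convention `G^m_0 = 0`. -/
noncomputable def Gk (c : ℕ → ℝ) (m n : ℕ) : ℝ :=
  if n = 0 then 0 else
  (Matrix.of fun i j : Fin n =>
    if i.val = n - 1 then c (m + n + j.val) else c (i.val + j.val + m)).det

/-- `E^m_n`: determinant of the `n×n` matrix with rows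
`(c_{m+k},…,c_{m+k+n-2}, c_{m+k+n+1})`, i.e. the last column advanced by 2. -/
noncomputable def Ek (c : ℕ → ℝ) (m n : ℕ) : ℝ :=
  (Matrix.of fun i j : Fin n =>
    if j.val = n - 1 then c (m + i.val + n + 1) else c (m + i.val + j.val)).det

/-- `F^m_n`: determinant of the `n×n` matrix with rows
`(c_{m+k},…,c_{m+k+n-3}, c_{m+k+n-1}, c_{m+k+n})`, i.e. column `n−2` skipped;
by convention `F^m_1 = 0`. -/
noncomputable def Fk (c : ℕ → ℝ) (m n : ℕ) : ℝ :=
  if n = 1 then 0 else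
  (Matrix.of fun i j : Fin n =>
    if n - 2 ≤ j.val then c (m + i.val + j.val + 1) else c (m + i.val + j.val)).det

/-- `S^m_n`: determinant of `(c_{m+σ(i)+σ(j)})` where `σ(i) = i` for `i ≤ n−2`
and `σ(n−1) = n`. -/
noncomputable def Sk (c : ℕ → ℝ) (m n : ℕ) : ℝ :=
  (Matrix.of fun i j : Fin n =>
    c (m + (if i.val = n - 1 then n else i.val) +
        (if j.val = n - 1 then n else j.val))).det

set_option linter.unreachableTactic false
set_option linter.unusedTactic false

open Matrix Finset

lemma succAbove_val' {n : ℕ} (i : Fin (n+1)) (a : Fin n) :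
    ((i.succAbove a : Fin (n+1)) : ℕ) = if (a:ℕ) < (i:ℕ) then (a:ℕ) else (a:ℕ) + 1 := by
  by_cases h : (a : ℕ) < (i : ℕ)
  · rw [Fin.succAbove_of_castSucc_lt _ _ (by simpa [Fin.lt_def] using h)]
    simp [h]
  · rw [Fin.succAbove_of_le_castSucc _ _ (by simpa [Fin.le_def] using not_lt.mp h)]
    simp [h]

section key
variable (c : ℕ → ℝ) (k : ℕ)

/-- ψ i = det of rows r₁,…,r_k, r_i truncated to length k+1 -/
noncomputable def psi (i : ℕ) : ℝ :=
  (Matrix.of fun a b : Fin (k+1) =>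
    if (a:ℕ) = k then c (i + b) else c ((a:ℕ) + 1 + b)).det

/-- cofactor minors of the last row of ψ -/
noncomputable def Dnat (b : ℕ) : ℝ :=
  (Matrix.of fun a b' : Fin k =>
    c ((a:ℕ) + 1 + (if (b':ℕ) < b then (b':ℕ) else (b':ℕ) + 1))).det

lemma psi_eq (i : ℕ) :
    psi c k i = ∑ b ∈ range (k+1), (-1:ℝ)^(k+b) * Dnat c k b * c (i + b) := by
  rw [psi, Matrix.det_succ_row _ (Fin.last k), ← Fin.sum_univ_eq_sum_range]
  refine Finset.sum_congr rfl fun b _ => ?_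
  have h1 : (Matrix.of fun a b : Fin (k+1) =>
      if (a:ℕ) = k then c (i + b) else c ((a:ℕ) + 1 + b)) (Fin.last k) b = c (i + b) := by
    simp [Fin.last]
  rw [h1]
  have h2 : ((Matrix.of fun a b : Fin (k+1) =>
      if (a:ℕ) = k then c (i + b) else c ((a:ℕ) + 1 + b)).submatrix
        (Fin.last k).succAbove b.succAbove).det = Dnat c k b := by
    rw [Dnat]
    congr 1
    ext a b'
    simp only [Matrix.submatrix_apply, Matrix.of_apply, Fin.succAbove_last, Fin.coe_castSucc]
    rw [if_neg (by omega), succAbove_val']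
  rw [h2]
  have : ((Fin.last k : Fin (k+1)) : ℕ) = k := rfl
  push_cast [this]
  ring
end key

section key2
variable (c : ℕ → ℝ) (k : ℕ)

noncomputable def Mbig : Matrix (Fin (k+3)) (Fin (k+3)) ℝ :=
  Matrix.of fun i j => c ((i:ℕ) + (j:ℕ))

noncomputable def Nbig : Matrix (Fin (k+3)) (Fin (k+3)) ℝ :=
  (Mbig c k).updateCol (Fin.last (k+2)) (fun i => psi c k (i:ℕ))

lemma Nbig_det_zero : (Nbig c k).det = 0 := by
  have key := Matrix.det_updateCol_sum (Mbig c k) (Fin.last (k+2))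
    (fun j => if (j:ℕ) < k+1 then (-1:ℝ)^(k+(j:ℕ)) * Dnat c k (j:ℕ) else 0)
  have hlast : ((Fin.last (k+2) : Fin (k+3)) : ℕ) = k + 2 := rfl
  rw [if_neg (by omega), zero_smul] at key
  rw [Nbig, show (fun i : Fin (k+3) => psi c k (i:ℕ))
      = fun i => ∑ j : Fin (k+3),
        (if (j:ℕ) < k+1 then (-1:ℝ)^(k+(j:ℕ)) * Dnat c k (j:ℕ) else 0) • Mbig c k i j
    from funext fun i => ?_, key]
  rw [psi_eq]
  have hst : ∀ (f : ℕ → ℝ) (a b : ℕ), a ≤ b →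
      ∑ x ∈ range b, (if x < a then f x else 0) = ∑ x ∈ range a, f x := by
    intro f a b hab
    calc ∑ x ∈ range b, (if x < a then f x else 0)
        = ∑ x ∈ range a, (if x < a then f x else 0) :=
          (Finset.sum_subset (Finset.range_subset_range.mpr hab)
            (fun x _ hx => if_neg (by simp at hx ⊢; omega))).symm
      _ = ∑ x ∈ range a, f x :=
          Finset.sum_congr rfl fun x hx => if_pos (Finset.mem_range.mp hx)
  have this1 : ∀ j : Fin (k+3),
      (if (j:ℕ) < k+1 then (-1:ℝ)^(k+(j:ℕ)) * Dnat c k (j:ℕ) else 0) • Mbig c k i j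
        = (fun jn : ℕ => if jn < k+1 then (-1:ℝ)^(k+jn) * Dnat c k jn * c ((i:ℕ) + jn) else 0) (j:ℕ) := by
    intro j
    by_cases h : (j:ℕ) < k+1 <;> simp [Mbig, h, mul_assoc]
  rw [Finset.sum_congr rfl (fun j _ => this1 j),
    Fin.sum_univ_eq_sum_range
      (fun jn : ℕ => if jn < k+1 then (-1:ℝ)^(k+jn) * Dnat c k jn * c ((i:ℕ) + jn) else 0) (k+3)]
  exact (hst _ _ _ (by omega)).symm
end key2

section key3
variable (c : ℕ → ℝ) (k : ℕ)

noncomputable def Dmin (i : ℕ) : ℝ :=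
  (Matrix.of fun a b : Fin (k+2) =>
    c ((if (a:ℕ) < i then (a:ℕ) else (a:ℕ)+1) + (b:ℕ))).det

lemma laplace :
    ∑ i ∈ range (k+3), (-1:ℝ)^(i + (k+2)) * psi c k i * Dmin c k i = 0 := by
  have h0 := Nbig_det_zero c k
  rw [Matrix.det_succ_column (Nbig c k) (Fin.last (k+2))] at h0
  rw [← h0, ← Fin.sum_univ_eq_sum_range]
  refine Finset.sum_congr rfl fun i _ => ?_
  have hlast : ((Fin.last (k+2) : Fin (k+3)) : ℕ) = k + 2 := rfl
  have h1 : Nbig c k i (Fin.last (k+2)) = psi c k (i:ℕ) := by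
    rw [Nbig, Matrix.updateCol_self]
  have h2 : ((Nbig c k).submatrix i.succAbove (Fin.last (k+2)).succAbove).det
      = Dmin c k (i:ℕ) := by
    rw [Dmin]
    congr 1
    ext a b
    rw [Matrix.submatrix_apply, Fin.succAbove_last, Nbig,
      Matrix.updateCol_ne (by
        intro hcast
        have h3 := congrArg Fin.val hcast
        simp [Fin.val_last] at h3
        omega)]
    rw [Mbig, Matrix.of_apply, Matrix.of_apply, succAbove_val']
    simp
  rw [h1, h2, hlast]

lemma psi_zero_of_mid (b : ℕ) (hb1 : 1 ≤ b) (hb2 : b ≤ k) : psi c k b = 0 := by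
  rw [psi]
  apply Matrix.det_zero_of_row_eq (i := (⟨b-1, by omega⟩ : Fin (k+1))) (j := ⟨k, by omega⟩)
  · intro h
    have h3 := congrArg Fin.val h
    simp only [] at h3
    omega
  · funext j
    simp only [Matrix.of_apply]
    rw [if_neg (show ¬(b - 1 = k) by omega)]
    simp only [if_pos trivial, if_true, eq_self_iff_true]
    congr 1
    omega

lemma psi_zero_eq : psi c k 0 = (-1:ℝ)^k * Hk c 0 (k+1) := by
  have hp := Matrix.det_permute (finRotate (k+1))
    (Matrix.of fun a b : Fin (k+1) => c ((a:ℕ) + (b:ℕ) + 0))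
  have hmat : psi c k 0 = ((Matrix.of fun a b : Fin (k+1) => c ((a:ℕ) + (b:ℕ) + 0)).submatrix
      (finRotate (k+1)) id).det := by
    rw [psi]
    congr 1
    ext a b
    rw [Matrix.submatrix_apply, Matrix.of_apply, Matrix.of_apply, id]
    rw [finRotate_succ_apply, Fin.val_add_one]
    by_cases h : a = Fin.last k
    · rw [if_pos h, if_pos (by rw [h]; rfl)]
      congr 1 <;> omega
    · rw [if_neg h, if_neg (by intro hv; exact h (Fin.ext hv))]
      congr 1 <;> omega
  rw [hmat, hp, sign_finRotate, Hk]
  push_cast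
  ring
end key3

section key4
variable (c : ℕ → ℝ) (k : ℕ)

lemma psi_k1 : psi c k (k+1) = Hk c 1 (k+1) := by
  rw [psi, Hk]
  congr 1
  ext a b
  simp only [Matrix.of_apply]
  by_cases h : (a:ℕ) = k
  · rw [if_pos h]; congr 1; omega
  · rw [if_neg h]; congr 1; omega

lemma psi_k2 : psi c k (k+2) = Gk c 1 (k+1) := by
  rw [psi, Gk, if_neg (by omega)]
  congr 1
  ext a b
  simp only [Matrix.of_apply]
  by_cases h : (a:ℕ) = k
  · rw [if_pos h, if_pos (by omega)]; congr 1; omega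
  · rw [if_neg h, if_neg (by omega)]; congr 1; omega

lemma dmin_0 : Dmin c k 0 = Hk c 1 (k+2) := by
  rw [Dmin, Hk]
  congr 1
  ext a b
  simp only [Matrix.of_apply]
  rw [if_neg (by omega)]
  congr 1; omega

lemma dmin_k2 : Dmin c k (k+2) = Hk c 0 (k+2) := by
  rw [Dmin, Hk]
  congr 1
  ext a b
  simp only [Matrix.of_apply]
  rw [if_pos (a.isLt)]
  congr 1 <;> omega

lemma dmin_k1 : Dmin c k (k+1) = Gk c 0 (k+2) := by
  rw [Dmin, Gk, if_neg (by omega)]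
  congr 1
  ext a b
  simp only [Matrix.of_apply]
  by_cases h : (a:ℕ) = k+1
  · rw [if_neg (by omega), if_pos (by omega)]; congr 1; omega
  · rw [if_pos (by have := a.isLt; omega), if_neg (by omega)]; congr 1 <;> omega

lemma key : Hk c 0 (k+1) * Hk c 1 (k+2) - Hk c 1 (k+1) * Gk c 0 (k+2)
    + Gk c 1 (k+1) * Hk c 0 (k+2) = 0 := by
  have h := laplace c k
  rw [Finset.sum_range_succ, Finset.sum_range_succ] at h
  have hmid : ∑ i ∈ range (k+1), (-1:ℝ)^(i+(k+2)) * psi c k i * Dmin c k i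
      = (-1:ℝ)^(0+(k+2)) * psi c k 0 * Dmin c k 0 := by
    apply Finset.sum_eq_single_of_mem 0 (by simp)
    intro b hb hb0
    rw [psi_zero_of_mid c k b (by omega) (by have := Finset.mem_range.mp hb; omega)]
    ring
  rw [hmid, psi_zero_eq, psi_k1, psi_k2, dmin_0, dmin_k1, dmin_k2] at h
  have e2 : (-1:ℝ)^((k+1)+(k+2)) = -1 := Odd.neg_one_pow ⟨k+1, by ring⟩
  have e3 : (-1:ℝ)^((k+2)+(k+2)) = 1 := Even.neg_one_pow ⟨k+2, by ring⟩
  have e1 : (-1:ℝ)^(0+(k+2)) * (-1:ℝ)^k = 1 := by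
    rw [← pow_add]; exact Even.neg_one_pow ⟨k+1, by ring⟩
  rw [e2, e3] at h
  linear_combination h - Hk c 0 (k+1) * Hk c 1 (k+2) * e1
end key4


/-- `G⁰_n H¹_{n-1} − G¹_{n-1} H⁰_n − H⁰_{n-1} H¹_n = 0` for `n ≥ 1`. -/
theorem G0_identity (c : ℕ → ℝ) (n : ℕ) (hn : 1 ≤ n) :
    Gk c 0 n * Hk c 1 (n - 1) - Gk c 1 (n - 1) * Hk c 0 n - Hk c 0 (n - 1) * Hk c 1 n = 0 := by
  match n, hn with
  | 1, _ => simp [Hk, Gk, Matrix.det_fin_one]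
  | (k+2), _ =>
    have h := key c k
    have h1 : k + 2 - 1 = k + 1 := rfl
    rw [h1]
    linarith [h]
end

section
/- For Hankel-type determinants built from c : ℕ → ℝ, the identity F^m_n H^m_{n-1} + E^m_{n-1} H^m_n − G^m_n G^m_{n-1} = 0 holds for m = 0,1 and all n ≥ 3, where E^m_n (resp. F^m_n) is the determinant of the n×n Hankel matrix H^m_n with its last column shifted by 2 (resp. rows ending with a skipped next-to-last column as specified). -/
open Matrix Finset

private lemma det_updateCol_sum'' {R : Type*} [CommRing R] {N : Type*} [DecidableEq N]
    [Fintype N] (A : Matrix N N R) (j : N) {ι : Type*} [DecidableEq ι] (s : Finset ι) (g : ι → N → R) :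
    (A.updateCol j (fun i => ∑ k ∈ s, g k i)).det = ∑ k ∈ s, (A.updateCol j (g k)).det := by
  induction s using Finset.induction_on with
  | empty =>
      simp only [Finset.sum_empty]
      exact Matrix.det_eq_zero_of_column_eq_zero j (fun i => by simp [Matrix.updateCol_self])
  | @insert a s ha ih =>
      rw [Finset.sum_insert ha,
        show (fun i => ∑ k ∈ insert a s, g k i)
          = (g a) + (fun i => ∑ k ∈ s, g k i) from funext fun i => by
            simp [Finset.sum_insert ha],
        Matrix.det_updateCol_add, ih]

private lemma fin_val_succAbove {p : ℕ} (k : Fin (p+1)) (j : Fin p) :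
    ((k.succAbove j : Fin (p+1)) : ℕ) = if (j:ℕ) < (k:ℕ) then (j:ℕ) else (j:ℕ)+1 := by
  by_cases h : (j:ℕ) < (k:ℕ)
  · rw [Fin.succAbove_of_castSucc_lt _ _ (by simpa [Fin.lt_def] using h), if_pos h]
    rfl
  · rw [Fin.succAbove_of_le_castSucc _ _ (by simp [Fin.le_def]; omega), if_neg h]
    rfl

section aux
variable (c : ℕ → ℝ) (m p : ℕ)

private noncomputable def Bmat : Matrix (Fin (p+3)) (Fin (p+4)) ℝ :=
  Matrix.of fun i k => c (m + i + k)

private noncomputable def Amat : Matrix (Fin (p+3)) (Fin (p+3)) ℝ :=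
  Matrix.of fun i j => if (j:ℕ) < p+1 then c (m + i + j)
    else if (i:ℕ) = p+2 then 1 else 0

private noncomputable def Dk (k : Fin (p+4)) : ℝ :=
  ((Bmat c m p).submatrix id k.succAbove).det

private noncomputable def Tk (x : Fin (p+3) → ℝ) : ℝ :=
  ((Amat c m p).updateCol (Fin.last (p+2)) x).det

private lemma hker (i : Fin (p+3)) :
    ∑ k : Fin (p+4), ((-1:ℝ)^(k:ℕ) * Dk c m p k) * Bmat c m p i k = 0 := by
  set V : Matrix (Fin (p+4)) (Fin (p+4)) ℝ := (Bmat c m p).submatrix (Fin.cons i id) id with hV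
  have h0 : V.det = 0 := by
    apply Matrix.det_zero_of_row_eq (i := 0) (j := i.succ) (Fin.succ_ne_zero i).symm
    funext k
    simp [hV, Matrix.submatrix_apply, Fin.cons_zero, Fin.cons_succ]
  have h1 := Matrix.det_succ_row_zero (n := p+3) V
  rw [h0] at h1
  rw [show ∑ k : Fin (p+4), ((-1:ℝ)^(k:ℕ) * Dk c m p k) * Bmat c m p i k
      = ∑ k : Fin (p+4), (-1:ℝ)^(k:ℕ) * V 0 k * (V.submatrix Fin.succ k.succAbove).det from
    Finset.sum_congr rfl fun k _ => by
      have h2 : V.submatrix Fin.succ k.succAbove = (Bmat c m p).submatrix id k.succAbove := by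
        ext a b
        simp [hV, Matrix.submatrix_apply, Fin.cons_succ]
      rw [h2]
      have h3 : V 0 k = Bmat c m p i k := by simp [hV, Matrix.submatrix_apply]
      rw [h3, Dk]
      ring]
  exact h1.symm


private lemma hmaster :
    ∑ k : Fin (p+4), ((-1:ℝ)^(k:ℕ) * Dk c m p k) * Tk c m p (fun i => Bmat c m p i k) = 0 := by
  have step1 : ∀ k : Fin (p+4),
      ((-1:ℝ)^(k:ℕ) * Dk c m p k) * Tk c m p (fun i => Bmat c m p i k)
        = ((Amat c m p).updateCol (Fin.last (p+2))
            (fun i => ((-1:ℝ)^(k:ℕ) * Dk c m p k) * Bmat c m p i k)).det := by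
    intro k
    rw [show (fun i => ((-1:ℝ)^(k:ℕ) * Dk c m p k) * Bmat c m p i k)
        = ((-1:ℝ)^(k:ℕ) * Dk c m p k) • (fun i => Bmat c m p i k) from rfl,
      Matrix.det_updateCol_smul, Tk]
  simp_rw [step1]
  have hlin := det_updateCol_sum'' (Amat c m p) (Fin.last (p+2)) Finset.univ
      (fun (k : Fin (p+4)) (i : Fin (p+3)) => ((-1:ℝ)^(k:ℕ) * Dk c m p k) * Bmat c m p i k)
  rw [← hlin]
  rw [show (fun i => ∑ k : Fin (p+4), ((-1:ℝ)^(k:ℕ) * Dk c m p k) * Bmat c m p i k)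
      = (fun _ => (0:ℝ)) from funext fun i => hker c m p i]
  exact Matrix.det_eq_zero_of_column_eq_zero _ (fun i => Matrix.updateCol_self)

private lemma hzero (k : Fin (p+4)) (hk : (k:ℕ) < p+1) :
    Tk c m p (fun i => Bmat c m p i k) = 0 := by
  apply Matrix.det_zero_of_column_eq (i := (⟨(k:ℕ), by omega⟩ : Fin (p+3)))
      (j := Fin.last (p+2))
  · simp [Fin.ext_iff]; omega
  · intro r
    rw [Matrix.updateCol_apply, Matrix.updateCol_apply, if_pos rfl,
      if_neg (by simp [Fin.ext_iff]; omega)]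
    simp only [Amat, Bmat, Matrix.of_apply]
    rw [if_pos hk]
private noncomputable def Nmat (t : ℕ) : Matrix (Fin (p+2)) (Fin (p+2)) ℝ :=
  Matrix.of fun i j => if (j:ℕ) < p+1 then c (m + i + j) else c (m + i + t)

private lemma hexp (k : Fin (p+4)) :
    Tk c m p (fun i => Bmat c m p i k) = -(Nmat c m p k).det := by
  set M := (Amat c m p).updateCol (Fin.last (p+2)) (fun i => Bmat c m p i k) with hM
  have hcol := Matrix.det_succ_column (n := p+2) M ⟨p+1, by omega⟩
  rw [Finset.sum_eq_single (Fin.last (p+2))] at hcol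
  · rw [Tk, ← hM, hcol]
    have hentry : M (Fin.last (p+2)) ⟨p+1, by omega⟩ = 1 := by
      rw [hM, Matrix.updateCol_apply, if_neg (by simp [Fin.ext_iff])]
      simp only [Amat, Matrix.of_apply, Fin.val_last]
      rw [if_neg (by omega)]
      simp
    have hsub : M.submatrix (Fin.last (p+2)).succAbove (⟨p+1, by omega⟩ : Fin (p+3)).succAbove
        = Nmat c m p k := by
      ext a b
      have hb' : (((⟨p+1, by omega⟩ : Fin (p+3)).succAbove b : Fin (p+3)) : ℕ)
          = if (b:ℕ) < p+1 then (b:ℕ) else (b:ℕ)+1 := fin_val_succAbove _ b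
      rw [Matrix.submatrix_apply, Fin.succAbove_last, hM, Matrix.updateCol_apply]
      have hbu : (b:ℕ) < p+2 := b.isLt
      by_cases hblt : (b:ℕ) < p+1
      · have hb2 : (((⟨p+1, by omega⟩ : Fin (p+3)).succAbove b : Fin (p+3)) : ℕ) = (b:ℕ) := by
          rw [hb', if_pos hblt]
        rw [if_neg (by rw [Fin.ext_iff, Fin.val_last, hb2]; omega)]
        simp only [Amat, Nmat, Matrix.of_apply]
        rw [if_pos (by rw [hb2]; omega), if_pos hblt]
        exact congrArg c (by rw [Fin.coe_castSucc, hb2])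
      · have hb2 : (((⟨p+1, by omega⟩ : Fin (p+3)).succAbove b : Fin (p+3)) : ℕ) = (b:ℕ)+1 := by
          rw [hb', if_neg hblt]
        rw [if_pos (by rw [Fin.ext_iff, Fin.val_last, hb2]; omega)]
        simp only [Bmat, Nmat, Matrix.of_apply]
        rw [if_neg hblt]
        exact congrArg c (by rw [Fin.coe_castSucc])
    have hsign : ((-1:ℝ)) ^ (((Fin.last (p+2) : Fin (p+3)) : ℕ)
        + ((⟨p+1, by omega⟩ : Fin (p+3)) : ℕ)) = -1 := by
      simp only [Fin.val_last]
      exact Odd.neg_one_pow ⟨p+1, by ring⟩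
    rw [hentry, hsub, hsign]
    ring
  · intro b _ hb
    have hzv : (b:ℕ) ≠ p+2 := fun h => hb (by rw [Fin.ext_iff, Fin.val_last]; exact h)
    have hz : M b ⟨p+1, by omega⟩ = 0 := by
      rw [hM, Matrix.updateCol_apply, if_neg (by simp [Fin.ext_iff])]
      simp only [Amat, Matrix.of_apply]
      rw [if_neg (by omega), if_neg hzv]
    rw [hz]
    ring
  · intro h
    exact absurd (Finset.mem_univ _) h

end aux

section idents
variable (c : ℕ → ℝ) (m p : ℕ)

private lemma hNa : (Nmat c m p (p+1)).det = Hk c m (p+2) := by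
  unfold Hk
  refine congrArg Matrix.det ?_
  ext i j
  simp only [Nmat, Matrix.of_apply]
  by_cases h : (j:ℕ) < p+1
  · rw [if_pos h]; exact congrArg c (by omega)
  · have hj : (j:ℕ) = p+1 := by have := j.isLt; omega
    rw [if_neg h]; exact congrArg c (by omega)

private lemma hNb : (Nmat c m p (p+2)).det = Gk c m (p+2) := by
  unfold Gk
  rw [if_neg (by omega), ← Matrix.det_transpose (Nmat c m p (p+2))]
  refine congrArg Matrix.det ?_
  ext i j
  rw [Matrix.transpose_apply]
  simp only [Nmat, Matrix.of_apply]
  by_cases h : (i:ℕ) < p+1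
  · rw [if_pos h, if_neg (by omega)]; exact congrArg c (by omega)
  · have hi : (i:ℕ) = p+1 := by have := i.isLt; omega
    rw [if_neg h, if_pos (by omega)]; exact congrArg c (by omega)

private lemma hNc : (Nmat c m p (p+3)).det = Ek c m (p+2) := by
  unfold Ek
  refine congrArg Matrix.det ?_
  ext i j
  simp only [Nmat, Matrix.of_apply]
  by_cases h : (j:ℕ) < p+1
  · rw [if_pos h, if_neg (by omega)]
  · have hj : (j:ℕ) = p+1 := by have := j.isLt; omega
    rw [if_neg h, if_pos (by omega)]; exact congrArg c (by omega)

private lemma hDa : Dk c m p ⟨p+1, by omega⟩ = Fk c m (p+3) := by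
  unfold Fk
  rw [if_neg (by omega)]
  unfold Dk
  refine congrArg Matrix.det ?_
  ext i j
  have hj : (((⟨p+1, by omega⟩ : Fin (p+4)).succAbove j : Fin (p+4)) : ℕ)
      = if (j:ℕ) < p+1 then (j:ℕ) else (j:ℕ)+1 := fin_val_succAbove _ j
  rw [Matrix.submatrix_apply]
  simp only [Bmat, Matrix.of_apply, id]
  by_cases h : (j:ℕ) < p+1
  · rw [if_neg (by omega)]
    exact congrArg c (by rw [hj, if_pos h])
  · rw [if_pos (by omega)]
    exact congrArg c (by rw [hj, if_neg h]; omega)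

private lemma hDb : Dk c m p ⟨p+2, by omega⟩ = Gk c m (p+3) := by
  unfold Gk
  rw [if_neg (by omega)]
  unfold Dk
  rw [← Matrix.det_transpose ((Bmat c m p).submatrix id (⟨p+2, by omega⟩ : Fin (p+4)).succAbove)]
  refine congrArg Matrix.det ?_
  ext i j
  rw [Matrix.transpose_apply, Matrix.submatrix_apply]
  simp only [Bmat, Matrix.of_apply, id]
  have hi : (((⟨p+2, by omega⟩ : Fin (p+4)).succAbove i : Fin (p+4)) : ℕ)
      = if (i:ℕ) < p+2 then (i:ℕ) else (i:ℕ)+1 := fin_val_succAbove _ i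
  by_cases h : (i:ℕ) < p+2
  · rw [if_neg (by omega)]
    exact congrArg c (by rw [hi, if_pos h]; omega)
  · have hi2 : (i:ℕ) = p+2 := by have := i.isLt; omega
    rw [if_pos (by omega)]
    exact congrArg c (by rw [hi, if_neg h]; omega)

private lemma hDc : Dk c m p ⟨p+3, by omega⟩ = Hk c m (p+3) := by
  unfold Hk Dk
  refine congrArg Matrix.det ?_
  ext i j
  have hj : (((⟨p+3, by omega⟩ : Fin (p+4)).succAbove j : Fin (p+4)) : ℕ)
      = if (j:ℕ) < p+3 then (j:ℕ) else (j:ℕ)+1 := fin_val_succAbove _ j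
  rw [Matrix.submatrix_apply]
  simp only [Bmat, Matrix.of_apply, id]
  exact congrArg c (by rw [hj, if_pos j.isLt]; omega)

end idents


/-- `F^m_n H^m_{n-1} + E^m_{n-1} H^m_n − G^m_n G^m_{n-1} = 0` for `m = 0,1` and `n ≥ 3`. -/
theorem F_identity (c : ℕ → ℝ) (m : ℕ) (hm : m = 0 ∨ m = 1) (n : ℕ) (hn : 3 ≤ n) :
    Fk c m n * Hk c m (n - 1) + Ek c m (n - 1) * Hk c m n - Gk c m n * Gk c m (n - 1) = 0 := by
  clear hm
  obtain ⟨p, rfl⟩ : ∃ p, n = p + 3 := ⟨n - 3, by omega⟩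
  clear hn
  have key := hmaster c m p
  have hsub : ∑ k : Fin (p+4), ((-1:ℝ)^(k:ℕ) * Dk c m p k) * Tk c m p (fun i => Bmat c m p i k)
      = ∑ k ∈ ({⟨p+1, by omega⟩, ⟨p+2, by omega⟩, ⟨p+3, by omega⟩} : Finset (Fin (p+4))),
        ((-1:ℝ)^(k:ℕ) * Dk c m p k) * Tk c m p (fun i => Bmat c m p i k) := by
    refine (Finset.sum_subset (Finset.subset_univ _) ?_).symm
    intro k _ hk
    simp only [Finset.mem_insert, Finset.mem_singleton] at hk
    push_neg at hk
    obtain ⟨h1, h2, h3⟩ := hk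
    have hklt : (k:ℕ) < p+1 := by
      have hb := k.isLt
      have v1 : (k:ℕ) ≠ p+1 := fun h => h1 (Fin.ext h)
      have v2 : (k:ℕ) ≠ p+2 := fun h => h2 (Fin.ext h)
      have v3 : (k:ℕ) ≠ p+3 := fun h => h3 (Fin.ext h)
      omega
    rw [hzero c m p k hklt]
    ring
  rw [hsub, Finset.sum_insert (by
      simp only [Finset.mem_insert, Finset.mem_singleton, Fin.ext_iff]
      omega),
    Finset.sum_insert (by
      simp only [Finset.mem_singleton, Fin.ext_iff]
      omega),
    Finset.sum_singleton] at key
  rw [hexp c m p, hexp c m p, hexp c m p] at key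
  rw [show ((⟨p+1, by omega⟩ : Fin (p+4)) : ℕ) = p+1 from rfl,
    show ((⟨p+2, by omega⟩ : Fin (p+4)) : ℕ) = p+2 from rfl,
    show ((⟨p+3, by omega⟩ : Fin (p+4)) : ℕ) = p+3 from rfl] at key
  rw [hNa c m p, hNb c m p, hNc c m p, hDa c m p, hDb c m p, hDc c m p] at key
  have e2 : ((-1:ℝ))^(p+2) = -((-1:ℝ))^(p+1) := by rw [pow_succ]; ring
  have e3 : ((-1:ℝ))^(p+3) = ((-1:ℝ))^(p+1) := by rw [pow_succ, pow_succ]; ring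
  rw [e2, e3] at key
  have hs : ((-1:ℝ))^(p+1) * ((-1:ℝ))^(p+1) = 1 := by
    rw [← pow_add]
    exact Even.neg_one_pow ⟨p+1, by ring⟩
  show Fk c m (p+3) * Hk c m (p+2) + Ek c m (p+2) * Hk c m (p+3)
      - Gk c m (p+3) * Gk c m (p+2) = 0
  linear_combination (-((-1:ℝ))^(p+1)) * key
    + (-(Fk c m (p+3) * Hk c m (p+2) + Ek c m (p+2) * Hk c m (p+3)
        - Gk c m (p+3) * Gk c m (p+2))) * hs
end

section
/- For Hankel-type determinants built from c : ℕ → ℝ, the identity E^1_n H^0_n − E^0_n H^1_n = G^0_{n+1} H^1_{n-1} holds for all n ≥ 2. -/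
/-!
Let `A` be the transpose of the matrix of `G⁰_{n+1}`. Deleting from `A` (row `0`, column `n - 1`),
(row `n`, column `n - 1`), (row `0`, column `n`), (row `n`, column `n`) leaves the matrices of `E¹_n`,
`E⁰_n`, `H¹_n`, `H⁰_n`, and deleting both rows and both columns leaves that of `H¹_{n-1}`; so the
identity is the Desnanot–Jacobi identity for these rows and columns. Jacobi's identity comes from
multiplying `A` by the identity matrix with two columns replaced by columns of `adj A`: the product
is `A` with those columns replaced by `det A • e_i`, and comparing determinants gives the identity
times `det A`, which can be cancelled for the generic matrix and then specialised.
-/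

open Matrix

namespace Matrix

variable {ι R : Type*} [Fintype ι] [DecidableEq ι] [CommRing R]

theorem det_one_updateCol_updateCol {j₁ j₂ : ι} (h : j₁ ≠ j₂) (u v : ι → R) :
    (((1 : Matrix ι ι R).updateCol j₁ u).updateCol j₂ v).det = u j₁ * v j₂ - u j₂ * v j₁ := by
  let U : Matrix ι (Fin 2) R := (of ![u - Pi.single j₁ 1, v - Pi.single j₂ 1])ᵀ
  let V : Matrix (Fin 2) ι R := of ![Pi.single j₁ 1, Pi.single j₂ 1]
  have hUV : ((1 : Matrix ι ι R).updateCol j₁ u).updateCol j₂ v = 1 + U * V := by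
    ext i j
    simp only [U, V, add_apply, mul_apply, Fin.sum_univ_two, of_apply, transpose_apply]
    rcases eq_or_ne j j₂ with rfl | h₂
    · simp [Pi.single_apply, one_apply, h]
    rcases eq_or_ne j j₁ with rfl | h₁
    · simp [Pi.single_apply, one_apply, h₂]
    · simp [Pi.single_apply, one_apply, h₁, h₂]
  rw [hUV, det_one_add_mul_comm, det_fin_two]
  simp only [U, V, add_apply, mul_apply, of_apply, transpose_apply]
  simp [Pi.single_apply, h, h.symm]
  ring

theorem det_updateCol_single_one (A : Matrix ι ι R) (i j : ι) :
    (A.updateCol j (Pi.single i 1)).det = adjugate A j i := by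
  rw [← cramer_apply, cramer_eq_adjugate_mulVec, mulVec_single_one, col_apply]

theorem mulVec_col_adjugate (A : Matrix ι ι R) (i : ι) :
    A *ᵥ (adjugate A).col i = A.det • Pi.single i 1 := by
  rw [← mulVec_single_one, mulVec_mulVec, mul_adjugate, smul_mulVec, one_mulVec]

theorem det_mul_jacobi_adjugate (A : Matrix ι ι R) {j₁ j₂ : ι} (h : j₁ ≠ j₂) (i₁ i₂ : ι) :
    A.det * (adjugate A j₁ i₁ * adjugate A j₂ i₂ - adjugate A j₂ i₁ * adjugate A j₁ i₂) =
      A.det * (A.det *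
        ((A.updateCol j₁ (Pi.single i₁ 1)).updateCol j₂ (Pi.single i₂ 1)).det) :=
  calc A.det * (adjugate A j₁ i₁ * adjugate A j₂ i₂ - adjugate A j₂ i₁ * adjugate A j₁ i₂)
      = (A * ((1 : Matrix ι ι R).updateCol j₁ ((adjugate A).col i₁)).updateCol j₂
          ((adjugate A).col i₂)).det := by
        rw [det_mul, det_one_updateCol_updateCol h]
        rfl
    _ = ((A.updateCol j₁ (A.det • Pi.single i₁ 1)).updateCol j₂
          (A.det • Pi.single i₂ 1)).det := by
        rw [mul_updateCol, mul_updateCol, mul_one, mulVec_col_adjugate, mulVec_col_adjugate]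
    _ = _ := by
        rw [det_updateCol_smul, updateCol_comm _ h, det_updateCol_smul, updateCol_comm _ h.symm]

theorem jacobi_adjugate (A : Matrix ι ι R) {j₁ j₂ : ι} (h : j₁ ≠ j₂) (i₁ i₂ : ι) :
    adjugate A j₁ i₁ * adjugate A j₂ i₂ - adjugate A j₂ i₁ * adjugate A j₁ i₂ =
      A.det * ((A.updateCol j₁ (Pi.single i₁ 1)).updateCol j₂ (Pi.single i₂ 1)).det := by
  let X := mvPolynomialX ι ι ℤ
  have hX := mul_left_cancel₀ (det_mvPolynomialX_ne_zero ι ℤ)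
    (det_mul_jacobi_adjugate X h i₁ i₂)
  let φ := MvPolynomial.aeval (R := ℤ) fun p : ι × ι => A p.1 p.2
  have hφ : φ.mapMatrix X = A := mvPolynomialX_mapMatrix_aeval ℤ A
  have hadj (j i : ι) : φ (adjugate X j i) = adjugate A j i := by
    rw [← hφ, ← AlgHom.map_adjugate]
    rfl
  have hsingle (i : ι) : φ ∘ Pi.single i 1 = Pi.single i 1 := by
    ext j
    simp [Pi.single_apply, apply_ite φ]
  have hφX := congrArg φ hX
  rw [map_sub, map_mul, map_mul, map_mul, hadj, hadj, hadj, hadj, AlgHom.map_det,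
    AlgHom.map_det, hφ, AlgHom.mapMatrix_apply, map_updateCol, map_updateCol, hsingle, hsingle,
    ← AlgHom.mapMatrix_apply, hφ] at hφX
  exact hφX

theorem det_updateCol_last_single_last {k : ℕ} (B : Matrix (Fin (k + 1)) (Fin (k + 1)) R) :
    (B.updateCol (Fin.last k) (Pi.single (Fin.last k) 1)).det =
      (B.submatrix Fin.castSucc Fin.castSucc).det := by
  rw [det_updateCol_single_one, adjugate_fin_succ_eq_det_submatrix, Fin.succAbove_last,
    Even.neg_one_pow ⟨_, rfl⟩, one_mul]

theorem submatrix_updateCol_castSucc {k : ℕ} (B : Matrix (Fin (k + 1)) (Fin (k + 1)) R)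
    (i j : Fin k) :
    (B.updateCol j.castSucc (Pi.single i.castSucc 1)).submatrix Fin.castSucc Fin.castSucc =
      (B.submatrix Fin.castSucc Fin.castSucc).updateCol j (Pi.single i 1) := by
  ext a b
  simp [updateCol_apply, Pi.single_apply]

theorem desnanot_jacobi {k : ℕ} (A : Matrix (Fin (k + 2)) (Fin (k + 2)) R) (i j : Fin (k + 1)) :
    (A.submatrix i.castSucc.succAbove j.castSucc.succAbove).det *
        (A.submatrix Fin.castSucc Fin.castSucc).det -
      (A.submatrix i.castSucc.succAbove Fin.castSucc).det *
        (A.submatrix Fin.castSucc j.castSucc.succAbove).det =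
      A.det * (A.submatrix (Fin.castSucc ∘ i.succAbove) (Fin.castSucc ∘ j.succAbove)).det := by
  have hJ := jacobi_adjugate A (Fin.castSucc_lt_last j).ne i.castSucc (Fin.last _)
  rw [det_updateCol_last_single_last, submatrix_updateCol_castSucc,
    det_updateCol_single_one] at hJ
  simp only [adjugate_fin_succ_eq_det_submatrix, Fin.succAbove_last, submatrix_submatrix,
    Fin.val_castSucc, Fin.val_last] at hJ
  have hk : (-1 : R) ^ (k + 1 + (k + 1)) = 1 := Even.neg_one_pow ⟨_, rfl⟩
  have hp : (-1 : R) ^ ((i : ℕ) + (k + 1)) * (-1) ^ (k + 1 + (j : ℕ)) = (-1) ^ ((i : ℕ) + j) := by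
    rw [← pow_add, show (i : ℕ) + (k + 1) + (k + 1 + j) = i + j + 2 * (k + 1) by ring, pow_add,
      pow_mul, neg_one_sq, one_pow, mul_one]
  rw [hk, one_mul, mul_mul_mul_comm, hp] at hJ
  exact ((isUnit_neg_one (α := R)).pow ((i : ℕ) + j)).mul_left_cancel (by linear_combination hJ)

end Matrix

/-- The transpose of the matrix of `G⁰_{n+1}`: the Hankel matrix `(c_{i+j})` with its last column
advanced by one. -/
noncomputable def borderedHankel (c : ℕ → ℝ) (n : ℕ) : Matrix (Fin (n + 1)) (Fin (n + 1)) ℝ :=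
  of fun i j => c (i + if j = Fin.last n then n + 1 else j)

theorem det_borderedHankel (c : ℕ → ℝ) (n : ℕ) : (borderedHankel c n).det = Gk c 0 (n + 1) := by
  rw [← det_transpose, Gk, if_neg n.succ_ne_zero]
  congr 1
  ext i j
  simp only [borderedHankel, transpose_apply, of_apply, Fin.ext_iff, Fin.val_last]
  split_ifs <;> congr 1 <;> omega

theorem det_submatrix_borderedHankel_eq_Hk (c : ℕ → ℝ) {n p : ℕ} (hp : p ≤ n)
    (f g : Fin p → Fin (n + 1)) (m : ℕ) (hf : ∀ i, (f i : ℕ) = i + m) (hg : ∀ j, (g j : ℕ) = j) :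
    ((borderedHankel c n).submatrix f g).det = Hk c m p := by
  rw [Hk]
  congr 1
  ext i j
  have := j.isLt
  simp only [borderedHankel, of_apply, submatrix_apply, Fin.ext_iff, Fin.val_last, hf, hg]
  split_ifs <;> congr 1 <;> omega

theorem det_submatrix_borderedHankel_eq_Ek (c : ℕ → ℝ) (n m : ℕ) (f : Fin (n + 1) → Fin (n + 2))
    (hf : ∀ i, (f i : ℕ) = i + m) :
    ((borderedHankel c (n + 1)).submatrix f (Fin.last n).castSucc.succAbove).det =
      Ek c m (n + 1) := by
  rw [Ek]
  congr 1
  ext i j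
  have := j.isLt
  simp only [borderedHankel, of_apply, submatrix_apply, Fin.ext_iff, Fin.succAbove, Fin.lt_def,
    hf, Fin.val_last, apply_ite Fin.val, Fin.val_castSucc, Fin.val_succ]
  split_ifs <;> congr 1 <;> omega

/-- `E¹_n H⁰_n − E⁰_n H¹_n = G⁰_{n+1} H¹_{n-1}` for `n ≥ 2`. -/
theorem E_difference_identity (c : ℕ → ℝ) (n : ℕ) (hn : 2 ≤ n) :
    Ek c 1 n * Hk c 0 n - Ek c 0 n * Hk c 1 n = Gk c 0 (n + 1) * Hk c 1 (n - 1) := by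
  obtain ⟨k, rfl⟩ : ∃ k, n = k + 1 := ⟨n - 1, by omega⟩
  have key := desnanot_jacobi (borderedHankel c (k + 1)) 0 (Fin.last k)
  rw [det_borderedHankel,
    det_submatrix_borderedHankel_eq_Ek c k 1 _ (by simp),
    det_submatrix_borderedHankel_eq_Ek c k 0 _ (by simp),
    det_submatrix_borderedHankel_eq_Hk c le_rfl _ _ 0 (by simp) (by simp),
    det_submatrix_borderedHankel_eq_Hk c le_rfl _ _ 1 (by simp) (by simp),
    det_submatrix_borderedHankel_eq_Hk c k.le_succ _ _ 1 (by simp) (by simp)] at key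
  rw [Nat.add_sub_cancel]
  linear_combination key
end

section
/- For Hankel-type determinants built from c : ℕ → ℝ, the identity E^m_n + F^m_n = S^m_n holds for n ≥ 3, where S^m_n is the 'skip-one' Hankel determinant with rows and columns indexed by 0,…,n−2,n. Equivalently, the second derivative of the Wronskian-type determinant σ^m_n(x) = det(f^{(i+j+m)}(x)) splits into two single-shift determinants. -/
lemma sum_det_updateRow_eq_sum_det_updateColumn {k : ℕ} (A B : Matrix (Fin k) (Fin k) ℝ) :
    ∑ r, (A.updateRow r (B r)).det = ∑ j, (A.updateCol j (fun i => B i j)).det := by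
  simp only [Matrix.det_apply]
  rw [Finset.sum_comm]
  conv_rhs => rw [Finset.sum_comm]
  refine Finset.sum_congr rfl fun σ _ => ?_
  rw [← Finset.smul_sum, ← Finset.smul_sum]
  congr 1
  rw [← Equiv.sum_comp σ]
  refine Finset.sum_congr rfl fun j _ => Finset.prod_congr rfl fun i _ => ?_
  rw [Matrix.updateRow_apply, Matrix.updateCol_apply]
  by_cases h : i = j
  · subst h; simp
  · rw [if_neg (fun hc => h (σ.injective hc)), if_neg h]



/-- `E^m_n + F^m_n = S^m_n` for `n ≥ 3`. -/
theorem E_add_F_eq_S (c : ℕ → ℝ) (m : ℕ) (hm : m = 0 ∨ m = 1) (n : ℕ) (hn : 3 ≤ n) :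
    Ek c m n + Fk c m n = Sk c m n := by
  set A : Matrix (Fin n) (Fin n) ℝ :=
    Matrix.of (fun i j : Fin n =>
      c (m + (if i.val = n - 1 then n else i.val) + j.val)) with hA
  set B : Matrix (Fin n) (Fin n) ℝ :=
    Matrix.of (fun i j : Fin n =>
      c (m + (if i.val = n - 1 then n else i.val) + j.val + 1)) with hB
  have key := sum_det_updateRow_eq_sum_det_updateColumn A B
  have h2 : n - 2 < n := by omega
  have h1 : n - 1 < n := by omega
  have hrow_zero : ∀ r : Fin n, r.val < n - 2 → (A.updateRow r (B r)).det = 0 := by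
    intro r hr
    refine Matrix.det_zero_of_row_eq (i := r) (j := ⟨r.val + 1, by omega⟩)
      (by rw [Ne, Fin.ext_iff]; simp only [Fin.val_mk]; omega) ?_
    funext j
    rw [Matrix.updateRow_self, Matrix.updateRow_ne
      (by rw [Ne, Fin.ext_iff]; simp only [Fin.val_mk]; omega)]
    simp only [hA, hB, Matrix.of_apply, Fin.val_mk]
    rw [if_neg (by omega), if_neg (by omega)]
    congr 1; omega
  have hcol_zero : ∀ j : Fin n, j.val < n - 1 →
      (A.updateCol j (fun i => B i j)).det = 0 := by
    intro j hj
    refine Matrix.det_zero_of_column_eq (i := j) (j := ⟨j.val + 1, by omega⟩)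
      (by rw [Ne, Fin.ext_iff]; simp only [Fin.val_mk]; omega) (fun i => ?_)
    rw [Matrix.updateCol_self, Matrix.updateCol_ne
      (by rw [Ne, Fin.ext_iff]; simp only [Fin.val_mk]; omega)]
    simp only [hA, hB, Matrix.of_apply, Fin.val_mk]
    congr 1 <;> omega
  have hS : ∑ j, (A.updateCol j (fun i => B i j)).det = Sk c m n := by
    rw [Finset.sum_eq_single (⟨n - 1, h1⟩ : Fin n)]
    · rw [Sk]
      congr 1
      funext i j
      rw [Matrix.updateCol_apply]
      simp only [hA, hB, Matrix.of_apply, Fin.val_mk]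
      by_cases hj : j.val = n - 1
      · rw [if_pos (Fin.ext (by simp only [Fin.val_mk]; exact hj)), if_pos hj]
        congr 1; omega
      · rw [if_neg (fun hc => hj (by simpa only [Fin.val_mk] using congrArg Fin.val hc)),
          if_neg hj]
    · intro j _ hj
      refine hcol_zero j ?_
      have : j.val ≠ n - 1 :=
        fun hc => hj (Fin.ext (by simp only [Fin.val_mk]; exact hc))
      omega
    · simp
  have hF : (A.updateRow ⟨n - 2, h2⟩ (B ⟨n - 2, h2⟩)).det = Fk c m n := by
    rw [Fk, if_neg (by omega), ← Matrix.det_transpose (A.updateRow _ _)]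
    congr 1
    funext i j
    rw [Matrix.transpose_apply, Matrix.updateRow_apply]
    simp only [hA, hB, Matrix.of_apply, Fin.val_mk]
    by_cases hj : j.val = n - 2
    · rw [if_pos (Fin.ext (by simp only [Fin.val_mk]; exact hj)),
        if_neg (show ¬ (n - 2 = n - 1) by omega),
        if_pos (show n - 2 ≤ j.val by omega)]
      congr 1; omega
    · rw [if_neg (fun hc => hj (by simpa only [Fin.val_mk] using congrArg Fin.val hc))]
      by_cases hj1 : j.val = n - 1
      · rw [if_pos hj1, if_pos (show n - 2 ≤ j.val by omega)]
        congr 1; omega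
      · rw [if_neg hj1, if_neg (show ¬ n - 2 ≤ j.val by omega)]
        congr 1; omega
  have hE : (A.updateRow ⟨n - 1, h1⟩ (B ⟨n - 1, h1⟩)).det = Ek c m n := by
    rw [Ek, ← Matrix.det_transpose (A.updateRow _ _)]
    congr 1
    funext i j
    rw [Matrix.transpose_apply, Matrix.updateRow_apply]
    simp only [hA, hB, Matrix.of_apply, Fin.val_mk]
    by_cases hj : j.val = n - 1
    · rw [if_pos (Fin.ext (by simp only [Fin.val_mk]; exact hj)),
        if_pos hj]
      simp only [if_true]
      congr 1 <;> omega
    · rw [if_neg (fun hc => hj (by simpa only [Fin.val_mk] using congrArg Fin.val hc)),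
        if_neg hj, if_neg hj]
      congr 1; omega
  have hFE : ∑ r, (A.updateRow r (B r)).det = Fk c m n + Ek c m n := by
    have hsub : (Finset.univ : Finset (Fin n)) =
        insert (⟨n - 2, h2⟩ : Fin n) {(⟨n - 1, h1⟩ : Fin n)} ∪
          (Finset.univ.filter fun r : Fin n => r.val < n - 2) := by
      ext r
      simp only [Finset.mem_univ, Finset.mem_union, Finset.mem_insert,
        Finset.mem_singleton, Finset.mem_filter, true_and, true_iff]
      by_cases hr : r.val < n - 2
      · right; exact hr
      · left
        by_cases hr1 : r.val = n - 2
        · left; exact Fin.ext (by simp only [Fin.val_mk]; exact hr1)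
        · right; exact Fin.ext (by simp only [Fin.val_mk]; omega)
    rw [hsub, Finset.sum_union]
    · rw [Finset.sum_insert (by
        simp only [Finset.mem_singleton, Fin.ext_iff, Fin.val_mk]; omega),
        Finset.sum_singleton, hF, hE]
      rw [Finset.sum_eq_zero (fun r hr => hrow_zero r (Finset.mem_filter.mp hr).2)]
      ring
    · rw [Finset.disjoint_left]
      intro r hr
      simp only [Finset.mem_insert, Finset.mem_singleton] at hr
      simp only [Finset.mem_filter, Finset.mem_univ, true_and, not_lt]
      rcases hr with h | h <;> (subst h; simp only [Fin.val_mk]; omega)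
  rw [← hS, ← key, hFE]
  ring
end

section
/- Combining the two previous identities: H^m_n (F^m_n + E^m_n) = (G^m_n)² + H^m_{n+1} H^m_{n-1} for all n ≥ 3. -/
open Matrix Fin Finset

lemma det_unit_col {R : Type*} [CommRing R] {k : ℕ} (N : Matrix (Fin (k+1)) (Fin (k+1)) R)
    (h : ∀ i, N i (Fin.last k) = if i = Fin.last k then 1 else 0) :
    N.det = (N.submatrix Fin.castSucc Fin.castSucc).det := by
  rw [Matrix.det_succ_column N (Fin.last k)]
  rw [Finset.sum_eq_single (Fin.last k)]
  · rw [h, if_pos rfl, Fin.succAbove_last]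
    have : (-1 : R) ^ ((Fin.last k : ℕ) + (Fin.last k : ℕ)) = 1 := by
      rw [← two_mul, pow_mul]; norm_num
    rw [this]; ring
  · intro i _ hi
    rw [h, if_neg hi, mul_zero, zero_mul]
  · intro hmem; exact absurd (Finset.mem_univ _) hmem

lemma jacobi {R : Type*} [CommRing R] [IsDomain R] {ν : ℕ}
    (M : Matrix (Fin (ν+2)) (Fin (ν+2)) R) (hM : M.det ≠ 0) :
    M.det * (M.submatrix (Fin.castSucc ∘ Fin.castSucc) (Fin.castSucc ∘ Fin.castSucc)).det =
      (M.submatrix (Fin.succAbove (Fin.castSucc (Fin.last ν))) (Fin.succAbove (Fin.castSucc (Fin.last ν)))).det *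
        (M.submatrix (Fin.succAbove (Fin.last (ν+1))) (Fin.succAbove (Fin.last (ν+1)))).det -
      (M.submatrix (Fin.succAbove (Fin.last (ν+1))) (Fin.succAbove (Fin.castSucc (Fin.last ν)))).det *
        (M.submatrix (Fin.succAbove (Fin.castSucc (Fin.last ν))) (Fin.succAbove (Fin.last (ν+1)))).det := by
  have hab : Fin.castSucc (Fin.last ν) ≠ Fin.last (ν+1) := Fin.ne_of_lt (Fin.castSucc_lt_last _)
  let C : Matrix (Fin (ν+2)) (Fin (ν+2)) R :=
    Matrix.of (fun i j => if j = Fin.castSucc (Fin.last ν) then (if i = Fin.castSucc (Fin.last ν) then (1:R) else 0)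
      else if j = Fin.last (ν+1) then (if i = Fin.last (ν+1) then 1 else 0) else M i j)
  have hCa : ∀ x, C x (Fin.castSucc (Fin.last ν)) = if x = Fin.castSucc (Fin.last ν) then 1 else 0 :=
    fun x => if_pos rfl
  have hCb : ∀ x, C x (Fin.last (ν+1)) = if x = Fin.last (ν+1) then 1 else 0 := fun x => by
    show (if Fin.last (ν+1) = Fin.castSucc (Fin.last ν) then _ else _) = _
    rw [if_neg (Ne.symm hab), if_pos rfl]
  have hCM : ∀ x j, j ≠ Fin.castSucc (Fin.last ν) → j ≠ Fin.last (ν+1) → C x j = M x j :=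
    fun x j h1 h2 => by
      show (if _ then _ else _) = _
      rw [if_neg h1, if_neg h2]
  have hC : C.det = (M.submatrix (Fin.castSucc ∘ Fin.castSucc) (Fin.castSucc ∘ Fin.castSucc)).det := by
    rw [det_unit_col C hCb]
    rw [det_unit_col (C.submatrix Fin.castSucc Fin.castSucc) (fun i => by
      rw [Matrix.submatrix_apply]
      rw [show Fin.castSucc (Fin.last (ν)) = (Fin.last ν).castSucc from rfl]
      rw [hCa]
      simp [Fin.castSucc_inj])]
    congr 1
    ext i j
    rw [Matrix.submatrix_apply, Matrix.submatrix_apply, Matrix.submatrix_apply]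
    rw [hCM _ _ (by
        intro hc
        have h := congrArg Fin.val hc
        have := j.isLt
        simp [Fin.last] at h
        omega)
      (Fin.ne_of_lt (Fin.castSucc_lt_last _))]
    rfl
  have hPentry : ∀ i j, (M.adjugate * C) i j =
      if j = Fin.castSucc (Fin.last ν) then M.adjugate i (Fin.castSucc (Fin.last ν))
      else if j = Fin.last (ν+1) then M.adjugate i (Fin.last (ν+1))
      else M.det * (if i = j then 1 else 0) := by
    intro i j
    by_cases h1 : j = Fin.castSucc (Fin.last ν)
    · subst h1
      rw [if_pos rfl, Matrix.mul_apply]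
      simp only [hCa, mul_ite, mul_one, mul_zero, Finset.sum_ite_eq', Finset.mem_univ, if_true]
    · rw [if_neg h1]
      by_cases h2 : j = Fin.last (ν+1)
      · subst h2
        rw [if_pos rfl, Matrix.mul_apply]
        simp only [hCb, mul_ite, mul_one, mul_zero, Finset.sum_ite_eq', Finset.mem_univ, if_true]
      · rw [if_neg h2]
        have : (M.adjugate * C) i j = (M.adjugate * M) i j := by
          rw [Matrix.mul_apply, Matrix.mul_apply]
          exact Finset.sum_congr rfl (fun x _ => by rw [hCM _ _ h1 h2])
        rw [this, Matrix.adjugate_mul, Matrix.smul_apply, Matrix.one_apply]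
        simp [smul_eq_mul]
  have hne1 : ∀ x : Fin ν, Fin.castAdd 2 x ≠ Fin.castSucc (Fin.last ν) := by
    intro x hc
    have h := congrArg Fin.val hc
    have := x.isLt
    simp [Fin.last] at h
    omega
  have hne2 : ∀ x : Fin ν, Fin.castAdd 2 x ≠ Fin.last (ν+1) := by
    intro x hc
    have h := congrArg Fin.val hc
    have := x.isLt
    simp [Fin.last] at h
    omega
  have hinl : ∀ x : Fin ν, (finSumFinEquiv (Sum.inl x) : Fin (ν+2)) = Fin.castAdd 2 x := fun x => rfl
  have hinr : ∀ x : Fin 2, (finSumFinEquiv (Sum.inr x) : Fin (ν+2)) = Fin.natAdd ν x := fun x => rfl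
  have hvr : ∀ x : Fin 2, (Fin.natAdd ν x) =
      (if x = 0 then Fin.castSucc (Fin.last ν) else Fin.last (ν+1)) := by
    intro x
    by_cases hx : x = 0
    · subst hx; rw [if_pos rfl]; apply Fin.ext; simp
    · have hx1 : (x : ℕ) = 1 := by have := x.isLt; omega
      rw [if_neg hx]; apply Fin.ext; simp [Fin.last, hx1]
  have hblock : (M.adjugate * C).submatrix finSumFinEquiv finSumFinEquiv =
      Matrix.fromBlocks (M.det • (1 : Matrix (Fin ν) (Fin ν) R))
        (Matrix.of fun i j => (M.adjugate * C) (finSumFinEquiv (Sum.inl i)) (finSumFinEquiv (Sum.inr j)))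
        (0 : Matrix (Fin 2) (Fin ν) R)
        (Matrix.of fun i j : Fin 2 => M.adjugate
          (if i = 0 then Fin.castSucc (Fin.last ν) else Fin.last (ν+1))
          (if j = 0 then Fin.castSucc (Fin.last ν) else Fin.last (ν+1))) := by
    ext i j
    cases i with
    | inl i => cases j with
      | inl j =>
        rw [Matrix.submatrix_apply, Matrix.fromBlocks_apply₁₁, hinl, hinl, hPentry]
        rw [if_neg (hne1 j), if_neg (hne2 j)]
        simp only [Matrix.smul_apply, Matrix.one_apply, smul_eq_mul]
        congr 1
        by_cases h : i = j
        · rw [if_pos h, if_pos (by rw [h])]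
        · rw [if_neg h, if_neg (fun hc => h (by
            apply Fin.ext
            simpa using congrArg Fin.val hc))]
      | inr j => rw [Matrix.submatrix_apply, Matrix.fromBlocks_apply₁₂]; rfl
    | inr i => cases j with
      | inl j =>
        rw [Matrix.submatrix_apply, Matrix.fromBlocks_apply₂₁, hinl, hinr, hPentry]
        rw [if_neg (hne1 j), if_neg (hne2 j), Matrix.zero_apply, if_neg, mul_zero]
        intro hc
        have h := congrArg Fin.val hc
        have := j.isLt
        simp [Fin.natAdd, Fin.castAdd, Fin.castLE] at h
        omega
      | inr j =>
        rw [Matrix.submatrix_apply, Matrix.fromBlocks_apply₂₂, Matrix.of_apply, hinr, hinr,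
          hvr i, hvr j, hPentry]
        by_cases hj : j = 0
        · rw [if_pos hj, if_pos rfl]
        · rw [if_neg hj, if_neg (Ne.symm hab), if_pos rfl]
  -- two evaluations of det (adj M * C)
  have e1 : (M.adjugate * C).det = M.det ^ (ν+1) * (M.submatrix (Fin.castSucc ∘ Fin.castSucc) (Fin.castSucc ∘ Fin.castSucc)).det := by
    rw [Matrix.det_mul, Matrix.det_adjugate, hC]
    congr 2
    simp
  have e2 : (M.adjugate * C).det = M.det ^ ν *
      (M.adjugate (Fin.castSucc (Fin.last ν)) (Fin.castSucc (Fin.last ν)) * M.adjugate (Fin.last (ν+1)) (Fin.last (ν+1))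
        - M.adjugate (Fin.castSucc (Fin.last ν)) (Fin.last (ν+1)) * M.adjugate (Fin.last (ν+1)) (Fin.castSucc (Fin.last ν))) := by
    rw [← Matrix.det_submatrix_equiv_self finSumFinEquiv (M.adjugate * C), hblock,
      Matrix.det_fromBlocks_zero₂₁, Matrix.det_smul, Matrix.det_one, mul_one]
    congr 1
    · simp
    · rw [Matrix.det_fin_two]
      simp
  have cancel : M.det * (M.submatrix (Fin.castSucc ∘ Fin.castSucc) (Fin.castSucc ∘ Fin.castSucc)).det =
      M.adjugate (Fin.castSucc (Fin.last ν)) (Fin.castSucc (Fin.last ν)) * M.adjugate (Fin.last (ν+1)) (Fin.last (ν+1))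
        - M.adjugate (Fin.castSucc (Fin.last ν)) (Fin.last (ν+1)) * M.adjugate (Fin.last (ν+1)) (Fin.castSucc (Fin.last ν)) := by
    apply mul_left_cancel₀ (pow_ne_zero ν hM)
    calc M.det ^ ν * (M.det * (M.submatrix (Fin.castSucc ∘ Fin.castSucc) (Fin.castSucc ∘ Fin.castSucc)).det)
        = M.det ^ (ν+1) * (M.submatrix (Fin.castSucc ∘ Fin.castSucc) (Fin.castSucc ∘ Fin.castSucc)).det := by ring
      _ = (M.adjugate * C).det := e1.symm
      _ = _ := by rw [e2]
  rw [cancel]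
  -- express adjugate entries as minors
  have sign1 : ∀ p : ℕ, ((-1:R)) ^ (p + p) = 1 := fun p => by
    rw [← two_mul, pow_mul]; norm_num
  rw [Matrix.adjugate_fin_succ_eq_det_submatrix, Matrix.adjugate_fin_succ_eq_det_submatrix,
    Matrix.adjugate_fin_succ_eq_det_submatrix, Matrix.adjugate_fin_succ_eq_det_submatrix]
  rw [show ((Fin.castSucc (Fin.last ν) : Fin (ν+2)) : ℕ) = ν from rfl,
    show ((Fin.last (ν+1) : Fin (ν+2)) : ℕ) = ν + 1 from rfl]
  rw [sign1 ν, sign1 (ν+1)]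
  ring_nf
  rw [show ((-1:R))^(ν*4) = 1 from by
    rw [show ν*4 = 2*(ν*2) from by ring, pow_mul]; norm_num]
  ring

lemma shift_lemma {R : Type*} [CommRing R] (c : ℕ → R) :
    ∀ (ν : ℕ) (b : Fin (ν+1) → ℕ),
    (Matrix.of fun i j : Fin (ν+1) => c ((if (i:ℕ) = ν then ν+1 else (i:ℕ)) + b j)).det =
      ∑ k : Fin (ν+1), (Matrix.of fun i j : Fin (ν+1) =>
        c ((i:ℕ) + b j + if j = k then 1 else 0)).det := by
  intro ν
  induction ν with
  | zero =>
    intro b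
    rw [Fin.sum_univ_one]
    rw [show (Matrix.of fun i j : Fin 1 => c ((if (i:ℕ) = 0 then 1 else (i:ℕ)) + b j)) =
      (Matrix.of fun i j : Fin 1 => c ((i:ℕ) + b j + if j = 0 then 1 else 0)) from by
        ext i j
        simp only [Matrix.of_apply]
        congr 1
        have hi : (i:ℕ) = 0 := by omega
        have hj : j = 0 := Fin.ext (by omega)
        rw [hj, if_pos rfl, hi, if_pos rfl]
        omega]
  | succ ν IH =>
    intro b
    have expandR : ∀ k : Fin (ν+2),
        (Matrix.of fun i j' : Fin (ν+2) => c ((i:ℕ) + b j' + if j' = k then 1 else 0)).det =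
        ∑ j : Fin (ν+2), (-1:R) ^ ((Fin.last (ν+1) : ℕ) + (j:ℕ)) *
          ((Matrix.of fun i j' : Fin (ν+2) => c ((i:ℕ) + b j' + if j' = k then 1 else 0))
            (Fin.last (ν+1)) j) *
          ((Matrix.of fun i j' : Fin (ν+2) => c ((i:ℕ) + b j' + if j' = k then 1 else 0)).submatrix
            (Fin.last (ν+1)).succAbove j.succAbove).det :=
      fun k => Matrix.det_succ_row _ (Fin.last (ν+1))
    rw [Matrix.det_succ_row _ (Fin.last (ν+1))]
    simp only [expandR]
    rw [Finset.sum_comm]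
    have hsub : ∀ (j k : Fin (ν+2)),
        ((Matrix.of fun i j' : Fin (ν+2) => c ((i:ℕ) + b j' + if j' = k then 1 else 0)).submatrix
          (Fin.last (ν+1)).succAbove j.succAbove) =
        (Matrix.of fun i' j' : Fin (ν+1) =>
          c ((i':ℕ) + b (j.succAbove j') + if j.succAbove j' = k then 1 else 0)) := by
      intro j k
      ext i' j'
      simp [Fin.succAbove_last]
    have hterm : ∀ j : Fin (ν+2), (-1:R) ^ ((Fin.last (ν+1) : ℕ) + (j:ℕ)) *
          ((Matrix.of fun i j' : Fin (ν+2) => c ((i:ℕ) + b j' + if j' = j then 1 else 0))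
            (Fin.last (ν+1)) j) *
          ((Matrix.of fun i j' : Fin (ν+2) => c ((i:ℕ) + b j' + if j' = j then 1 else 0)).submatrix
            (Fin.last (ν+1)).succAbove j.succAbove).det =
        (-1:R) ^ ((Fin.last (ν+1) : ℕ) + (j:ℕ)) *
          ((Matrix.of fun i j' : Fin (ν+2) => c ((if (i:ℕ) = ν+1 then ν+2 else (i:ℕ)) + b j'))
            (Fin.last (ν+1)) j) *
          ((Matrix.of fun i j' : Fin (ν+2) => c ((if (i:ℕ) = ν+1 then ν+2 else (i:ℕ)) + b j')).submatrix
            (Fin.last (ν+1)).succAbove j.succAbove).det := by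
      intro j
      congr 1
      · congr 1
        show c ((ν+1) + b j + if j = j then 1 else 0) =
          c ((if (ν+1:ℕ) = ν+1 then ν+2 else (ν+1:ℕ)) + b j)
        rw [if_pos rfl, if_pos rfl]
        congr 1
        omega
      · rw [hsub]
        congr 1
        ext i' j'
        simp only [Matrix.of_apply, Matrix.submatrix_apply, Fin.succAbove_last]
        rw [if_neg (Fin.succAbove_ne j j'), add_zero]
        rw [if_neg (by simp only [Fin.coe_castSucc]; omega :
          ¬ ((Fin.castSucc i' : Fin (ν+2)) : ℕ) = ν+1)]
        simp
    -- Q j and the vanishing extra sum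
    have step1 : ∀ j : Fin (ν+2),
        (∑ k : Fin (ν+2), (-1:R) ^ ((Fin.last (ν+1) : ℕ) + (j:ℕ)) *
          ((Matrix.of fun i j' : Fin (ν+2) => c ((i:ℕ) + b j' + if j' = k then 1 else 0))
            (Fin.last (ν+1)) j) *
          ((Matrix.of fun i j' : Fin (ν+2) => c ((i:ℕ) + b j' + if j' = k then 1 else 0)).submatrix
            (Fin.last (ν+1)).succAbove j.succAbove).det) =
        ((-1:R) ^ ((Fin.last (ν+1) : ℕ) + (j:ℕ)) *
          ((Matrix.of fun i j' : Fin (ν+2) => c ((if (i:ℕ) = ν+1 then ν+2 else (i:ℕ)) + b j'))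
            (Fin.last (ν+1)) j) *
          ((Matrix.of fun i j' : Fin (ν+2) => c ((if (i:ℕ) = ν+1 then ν+2 else (i:ℕ)) + b j')).submatrix
            (Fin.last (ν+1)).succAbove j.succAbove).det) +
        ((-1:R) ^ ((Fin.last (ν+1) : ℕ) + (j:ℕ)) * c ((ν+1) + b j)) *
          (Matrix.of fun i' j' : Fin (ν+1) =>
            c ((if (i':ℕ) = ν then ν+1 else (i':ℕ)) + (b ∘ j.succAbove) j')).det := by
      intro j
      rw [Fin.sum_univ_succAbove _ j, hterm j]
      congr 1
      have hco : ∀ k' : Fin (ν+1),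
          (-1:R) ^ ((Fin.last (ν+1) : ℕ) + (j:ℕ)) *
            ((Matrix.of fun i j' : Fin (ν+2) => c ((i:ℕ) + b j' + if j' = j.succAbove k' then 1 else 0))
              (Fin.last (ν+1)) j) *
            ((Matrix.of fun i j' : Fin (ν+2) => c ((i:ℕ) + b j' + if j' = j.succAbove k' then 1 else 0)).submatrix
              (Fin.last (ν+1)).succAbove j.succAbove).det =
          ((-1:R) ^ ((Fin.last (ν+1) : ℕ) + (j:ℕ)) * c ((ν+1) + b j)) *
            (Matrix.of fun i' j' : Fin (ν+1) =>
              c ((i':ℕ) + (b ∘ j.succAbove) j' + if j' = k' then 1 else 0)).det := by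
        intro k'
        rw [mul_assoc, mul_assoc]
        congr 1
        congr 1
        · show c ((ν+1) + b j + if j = j.succAbove k' then 1 else 0) = c ((ν+1) + b j)
          rw [if_neg (Ne.symm (Fin.succAbove_ne j k')), add_zero]
        · rw [hsub]
          congr 1
          ext i' j'
          simp only [Matrix.of_apply, Function.comp_apply]
          congr 2
          by_cases h : j' = k'
          · rw [if_pos h, if_pos (by rw [h])]
          · rw [if_neg h, if_neg (fun hc => h (Fin.succAbove_right_injective hc))]
      rw [Finset.sum_congr rfl (fun k' _ => hco k')]
      rw [← Finset.mul_sum, ← IH (b ∘ j.succAbove)]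
    rw [Finset.sum_congr rfl (fun j _ => step1 j), Finset.sum_add_distrib]
    -- the second sum is the last-row expansion of a matrix with two equal rows
    have hZ : (∑ j : Fin (ν+2),
        ((-1:R) ^ ((Fin.last (ν+1) : ℕ) + (j:ℕ)) * c ((ν+1) + b j)) *
          (Matrix.of fun i' j' : Fin (ν+1) =>
            c ((if (i':ℕ) = ν then ν+1 else (i':ℕ)) + (b ∘ j.succAbove) j')).det) = 0 := by
      have hZ0 : (Matrix.of fun i j' : Fin (ν+2) =>
          c ((if ν ≤ (i:ℕ) then ν+1 else (i:ℕ)) + b j')).det = 0 := by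
        apply Matrix.det_zero_of_row_eq (i := (⟨ν, by omega⟩ : Fin (ν+2))) (j := Fin.last (ν+1))
        · intro hc
          have := congrArg Fin.val hc
          simp [Fin.last] at this
        · funext j'
          show c ((if ν ≤ ν then ν+1 else ν) + b j') = c ((if ν ≤ ν+1 then ν+1 else ν+1) + b j')
          rw [if_pos (le_refl ν), if_pos (by omega)]
      rw [Matrix.det_succ_row _ (Fin.last (ν+1))] at hZ0
      rw [← hZ0]
      refine Finset.sum_congr rfl (fun j _ => ?_)
      congr 1
      · congr 1
        show c ((ν+1) + b j) = c ((if ν ≤ ν+1 then ν+1 else ν+1) + b j)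
        rw [if_pos (by omega)]
      · congr 1
        ext i' j'
        simp only [Matrix.of_apply, Matrix.submatrix_apply, Fin.succAbove_last]
        congr 1
        by_cases h : (i':ℕ) = ν
        · rw [if_pos h, if_pos (by simp only [Fin.coe_castSucc]; omega)]
          rfl
        · rw [if_neg h, if_neg (by simp only [Fin.coe_castSucc]; have := i'.isLt; omega)]
          simp
    rw [hZ, add_zero]

noncomputable def HkA {R : Type*} [CommRing R] (c : ℕ → R) (m n : ℕ) : R :=
  (Matrix.of fun i j : Fin n => c ((i:ℕ) + (j:ℕ) + m)).det

noncomputable def SkA {R : Type*} [CommRing R] (c : ℕ → R) (m n : ℕ) : R :=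
  (Matrix.of fun i j : Fin n =>
    c (m + (if (i:ℕ) = n - 1 then n else (i:ℕ)) + (if (j:ℕ) = n - 1 then n else (j:ℕ)))).det

noncomputable def GkA {R : Type*} [CommRing R] (c : ℕ → R) (m n : ℕ) : R :=
  (Matrix.of fun i j : Fin n =>
    if (i:ℕ) = n - 1 then c (m + n + (j:ℕ)) else c ((i:ℕ) + (j:ℕ) + m)).det

-- mapping lemmas
lemma map_HkA {R S : Type*} [CommRing R] [CommRing S] (f : R →+* S) (c : ℕ → R) (m n : ℕ) :
    f (HkA c m n) = HkA (fun s => f (c s)) m n := by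
  unfold HkA
  rw [RingHom.map_det]
  congr 1

lemma map_SkA {R S : Type*} [CommRing R] [CommRing S] (f : R →+* S) (c : ℕ → R) (m n : ℕ) :
    f (SkA c m n) = SkA (fun s => f (c s)) m n := by
  unfold SkA
  rw [RingHom.map_det]
  congr 1

lemma map_GkA {R S : Type*} [CommRing R] [CommRing S] (f : R →+* S) (c : ℕ → R) (m n : ℕ) :
    f (GkA c m n) = GkA (fun s => f (c s)) m n := by
  unfold GkA
  rw [RingHom.map_det]
  congr 1
  ext i j
  simp [RingHom.mapMatrix_apply, apply_ite f]

lemma keyA {R : Type*} [CommRing R] [IsDomain R] (c : ℕ → R) (m k : ℕ)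
    (hd : HkA c m (k+4) ≠ 0) :
    HkA c m (k+3) * SkA c m (k+3) = GkA c m (k+3)^2 + HkA c m (k+4) * HkA c m (k+2) := by
  have hJ := jacobi (R := R) (ν := k+2) (Matrix.of fun i j : Fin (k+4) => c ((i:ℕ) + (j:ℕ) + m)) hd
  -- value of succAbove at the two special points
  have hsa : ∀ i : Fin (k+3),
      (((Fin.castSucc (Fin.last (k+2))).succAbove i : Fin (k+4)) : ℕ) =
        if (i:ℕ) = k+2 then k+3 else (i:ℕ) := by
    intro i
    by_cases h : (i:ℕ) < k+2
    · rw [Fin.succAbove_of_castSucc_lt _ _ (by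
        rw [Fin.lt_def]; simpa using h)]
      rw [if_neg (by omega)]
      simp
    · have hi : (i:ℕ) = k+2 := by have := i.isLt; omega
      rw [Fin.succAbove_of_le_castSucc _ _ (by
        rw [Fin.le_def]; simpa using (by omega : k+2 ≤ (i:ℕ)))]
      rw [if_pos hi]
      simp [hi]
  have hsb : ∀ i : Fin (k+3), (((Fin.last (k+3)).succAbove i : Fin (k+4)) : ℕ) = (i:ℕ) := by
    intro i; rw [Fin.succAbove_last]; simp
  -- identify the six determinants
  have h1 : (Matrix.of fun i j : Fin (k+4) => c ((i:ℕ) + (j:ℕ) + m)).det = HkA c m (k+4) := rfl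
  have h2 : ((Matrix.of fun i j : Fin (k+4) => c ((i:ℕ) + (j:ℕ) + m)).submatrix
      (Fin.castSucc ∘ Fin.castSucc) (Fin.castSucc ∘ Fin.castSucc)).det = HkA c m (k+2) := rfl
  have h3 : ((Matrix.of fun i j : Fin (k+4) => c ((i:ℕ) + (j:ℕ) + m)).submatrix
      (Fin.succAbove (Fin.castSucc (Fin.last (k+2)))) (Fin.succAbove (Fin.castSucc (Fin.last (k+2))))).det
      = SkA c m (k+3) := by
    unfold SkA
    congr 1
    ext i j
    show c (_ + _ + m) = c (m + (if (i:ℕ) = k+3-1 then k+3 else (i:ℕ)) + (if (j:ℕ) = k+3-1 then k+3 else (j:ℕ)))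
    rw [show k+3-1 = k+2 from rfl, hsa, hsa]
    congr 1
    omega
  have h4 : ((Matrix.of fun i j : Fin (k+4) => c ((i:ℕ) + (j:ℕ) + m)).submatrix
      (Fin.succAbove (Fin.last (k+3))) (Fin.succAbove (Fin.last (k+3)))).det = HkA c m (k+3) := by
    unfold HkA
    congr 1
    ext i j
    simp only [Matrix.submatrix_apply, Matrix.of_apply]
    rw [hsb, hsb]
  have h5 : ((Matrix.of fun i j : Fin (k+4) => c ((i:ℕ) + (j:ℕ) + m)).submatrix
      (Fin.succAbove (Fin.castSucc (Fin.last (k+2)))) (Fin.succAbove (Fin.last (k+3)))).det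
      = GkA c m (k+3) := by
    unfold GkA
    congr 1
    ext i j
    simp only [Matrix.submatrix_apply, Matrix.of_apply]
    rw [hsa, hsb]
    by_cases h : (i:ℕ) = k+3-1
    · rw [if_pos h, if_pos (by omega : (i:ℕ) = k+2)]
      congr 1
      omega
    · rw [if_neg h, if_neg (by omega : ¬ (i:ℕ) = k+2)]
  have h6 : ((Matrix.of fun i j : Fin (k+4) => c ((i:ℕ) + (j:ℕ) + m)).submatrix
      (Fin.succAbove (Fin.last (k+3))) (Fin.succAbove (Fin.castSucc (Fin.last (k+2))))).det
      = GkA c m (k+3) := by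
    rw [← Matrix.det_transpose]
    unfold GkA
    congr 1
    ext i j
    simp only [Matrix.transpose_apply, Matrix.submatrix_apply, Matrix.of_apply]
    rw [hsb, hsa]
    by_cases h : (i:ℕ) = k+3-1
    · rw [if_pos h, if_pos (by omega : (i:ℕ) = k+2)]
      congr 1
      omega
    · rw [if_neg h, if_neg (by omega : ¬ (i:ℕ) = k+2)]
      congr 1
      omega
  rw [h1, h2, h3, h4, h5, h6] at hJ
  linear_combination -hJ

lemma univ_ne_zero (m k : ℕ) : HkA (MvPolynomial.X : ℕ → MvPolynomial ℕ ℤ) m (k+4) ≠ 0 := by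
  intro h0
  have h1 := congrArg (MvPolynomial.eval (fun s : ℕ => if s = k+3+m then (1:ℤ) else 0)) h0
  rw [map_zero, map_HkA] at h1
  have h2 : (fun s => MvPolynomial.eval (fun s : ℕ => if s = k+3+m then (1:ℤ) else 0)
      (MvPolynomial.X s)) = fun s : ℕ => if s = k+3+m then (1:ℤ) else 0 := by
    funext s; rw [MvPolynomial.eval_X]
  rw [h2] at h1
  have h3 : HkA (fun s : ℕ => if s = k+3+m then (1:ℤ) else 0) m (k+4) =
      ((1 : Matrix (Fin (k+4)) (Fin (k+4)) ℤ).submatrix (Fin.revPerm) id).det := by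
    unfold HkA
    congr 1
    ext i j
    simp only [Matrix.submatrix_apply, Matrix.one_apply, Matrix.of_apply, id_eq,
      Fin.revPerm_apply]
    by_cases h : (i:ℕ) + (j:ℕ) + m = k+3+m
    · rw [if_pos h, if_pos (Fin.ext (by
        rw [Fin.val_rev]
        have := i.isLt; have := j.isLt
        omega))]
    · rw [if_neg h, if_neg (fun hc => h (by
        have := congrArg Fin.val hc
        rw [Fin.val_rev] at this
        have := i.isLt; have := j.isLt
        omega))]
  rw [h3, Matrix.det_permute, Matrix.det_one, mul_one] at h1
  rcases Int.units_eq_one_or (Equiv.Perm.sign (Fin.revPerm : Equiv.Perm (Fin (k+4)))) with h | h <;>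
    rw [h] at h1 <;> simp at h1

lemma key_real (c : ℕ → ℝ) (m k : ℕ) :
    HkA c m (k+3) * SkA c m (k+3) = GkA c m (k+3)^2 + HkA c m (k+4) * HkA c m (k+2) := by
  have hP := keyA (MvPolynomial.X : ℕ → MvPolynomial ℕ ℤ) m k (univ_ne_zero m k)
  have hQ := congrArg (MvPolynomial.eval₂Hom (Int.castRingHom ℝ) c) hP
  simp only [_root_.map_mul, _root_.map_add, _root_.map_pow, map_HkA, map_SkA, map_GkA] at hQ
  have hc : (fun s => MvPolynomial.eval₂Hom (Int.castRingHom ℝ) c (MvPolynomial.X s)) = c := by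
    funext s; rw [MvPolynomial.eval₂Hom_X']
  rw [hc] at hQ
  exact hQ

lemma Sk_split (c : ℕ → ℝ) (m k : ℕ) : Sk c m (k+3) = Fk c m (k+3) + Ek c m (k+3) := by
  have h := shift_lemma (fun s => c (m + s)) (k+2)
    (fun j : Fin (k+3) => if (j:ℕ) = k+2 then k+3 else (j:ℕ))
  have hL : Sk c m (k+3) = (Matrix.of fun i j : Fin (k+3) =>
      (fun s => c (m + s)) ((if (i:ℕ) = k+2 then k+3 else (i:ℕ)) +
        (if (j:ℕ) = k+2 then k+3 else (j:ℕ)))).det := by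
    unfold Sk
    congr 1
    ext i j
    simp only [Matrix.of_apply]
    rw [show k+3-1 = k+2 from rfl]
    congr 1
    omega
  rw [hL, h]
  have hvanish : ∀ x : Fin (k+3), x ∈ Finset.univ →
      x ∉ ({⟨k+1, by omega⟩, ⟨k+2, by omega⟩} : Finset (Fin (k+3))) →
      (Matrix.of fun i j : Fin (k+3) =>
        (fun s => c (m + s)) ((i:ℕ) + (if (j:ℕ) = k+2 then k+3 else (j:ℕ)) +
          if j = x then 1 else 0)).det = 0 := by
    intro x _ hx
    simp only [Finset.mem_insert, Finset.mem_singleton, Fin.ext_iff] at hx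
    push_neg at hx
    obtain ⟨hx1, hx2⟩ := hx
    have hxk : (x:ℕ) ≤ k := by have := x.isLt; omega
    apply Matrix.det_zero_of_column_eq (i := x) (j := (⟨(x:ℕ)+1, by omega⟩ : Fin (k+3)))
    · intro hc
      have := congrArg Fin.val hc
      simp at this
    · intro r
      have hj2 : ¬ (((⟨(x:ℕ)+1, by omega⟩ : Fin (k+3)) : ℕ) = k+2) := by
        simp only [Fin.val_mk]
        omega
      have hjx : ¬ ((⟨(x:ℕ)+1, by omega⟩ : Fin (k+3)) = x) := by
        intro hc
        have := congrArg Fin.val hc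
        simp at this
      have hxx : ¬ ((x:ℕ) = k+2) := by omega
      simp only [Matrix.of_apply, if_neg hxx, if_neg hj2, if_neg hjx, if_pos rfl]
      congr 1
      all_goals try simp only [Fin.val_mk]
      all_goals omega
  rw [← Finset.sum_subset (Finset.subset_univ
    ({⟨k+1, by omega⟩, ⟨k+2, by omega⟩} : Finset (Fin (k+3)))) hvanish]
  rw [Finset.sum_pair (by
    intro hc
    have := congrArg Fin.val hc
    simp at this)]
  congr 1
  · -- term at k+1 is Fk
    unfold Fk
    rw [if_neg (by omega)]
    congr 1
    ext i j
    simp only [Matrix.of_apply]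
    rw [show k+3-2 = k+1 from rfl]
    by_cases h2 : (j:ℕ) = k+2
    · rw [if_pos h2, if_neg (by
        intro hc
        have := congrArg Fin.val hc
        simp at this
        omega), if_pos (by omega : k+1 ≤ (j:ℕ))]
      congr 1
      omega
    · by_cases h1 : (j:ℕ) = k+1
      · rw [if_neg h2, if_pos (Fin.ext (by simpa using h1)), if_pos (by omega : k+1 ≤ (j:ℕ))]
        congr 1
        omega
      · rw [if_neg h2, if_neg (by
          intro hc
          have := congrArg Fin.val hc
          simp at this
          omega), if_neg (by omega : ¬ k+1 ≤ (j:ℕ))]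
        congr 1
        omega
  · -- term at k+2 is Ek
    unfold Ek
    congr 1
    ext i j
    simp only [Matrix.of_apply]
    rw [show k+3-1 = k+2 from rfl]
    by_cases h2 : (j:ℕ) = k+2
    · rw [if_pos h2, if_pos (Fin.ext (by simpa using h2)), if_pos h2]
      congr 1
      omega
    · rw [if_neg h2, if_neg (by
        intro hc
        have := congrArg Fin.val hc
        simp at this
        omega), if_neg h2]
      congr 1
      omega

/-- `H^m_n (F^m_n + E^m_n) = (G^m_n)² + H^m_{n+1} H^m_{n-1}` for `n ≥ 3`. -/
theorem FGH_identity (c : ℕ → ℝ) (m : ℕ) (hm : m = 0 ∨ m = 1) (n : ℕ) (hn : 3 ≤ n) :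
    Hk c m n * (Fk c m n + Ek c m n) = (Gk c m n) ^ 2 + Hk c m (n + 1) * Hk c m (n - 1) := by
  obtain ⟨k, rfl⟩ : ∃ k, n = k + 3 := ⟨n - 3, by omega⟩
  have hS := Sk_split c m k
  have hkey := key_real c m k
  have e1 : Hk c m (k+3) = HkA c m (k+3) := rfl
  have e2 : Sk c m (k+3) = SkA c m (k+3) := rfl
  have e3 : Gk c m (k+3) = GkA c m (k+3) := by
    unfold Gk GkA
    rw [if_neg (by omega)]
  have e4 : Hk c m (k+3+1) = HkA c m (k+4) := rfl
  have e5 : Hk c m (k+3-1) = HkA c m (k+2) := rfl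
  rw [← hS, e1, e2, e3, e4, e5, hkey]
end

section
/- Vanishing sum identity: for m ∈ {0,1} and n ≥ 1, Σ_{j=m}^{n-1+m} det(A_m,…,A_{j-1}, A*_{j+1}, A_{j+1},…,A_{n-1+m}) = 0, where A*_j is the column ((n−1)c_j, (n−2)c_{j+1}, …, c_{j+n-2}, 0)ᵀ. -/
/-- Vanishing sum identity:
`Σ_{j=m}^{n-1+m} det(A_m,…,A*_{j+1},…,A_{n-1+m}) = 0`, where
`A*_j = ((n−1−i) c_{j+i})ᵢ`. -/
theorem sum_det_Astar_one (c : ℕ → ℝ) (m : ℕ) (hm : m = 0 ∨ m = 1) (n : ℕ) (hn : 1 ≤ n) :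
    (∑ p : Fin n,
      (Matrix.of fun i q : Fin n =>
        if q = p then ((n - 1 - i.val : ℕ) : ℝ) * c (m + p.val + 1 + i.val)
        else c (m + q.val + i.val)).det) = 0 := by
  set A : Matrix (Fin n) (Fin n) ℝ := Matrix.of fun i q => c (m + q.val + i.val) with hA
  set N : Matrix (Fin n) (Fin n) ℝ := Matrix.of (fun i k =>
    if k.val = i.val + 1 then ((n - 1 - i.val : ℕ) : ℝ) else 0) with hN
  have hterm : ∀ p : Fin n,
      (Matrix.of fun i q : Fin n =>
        if q = p then ((n - 1 - i.val : ℕ) : ℝ) * c (m + p.val + 1 + i.val)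
        else c (m + q.val + i.val)).det
      = (A.adjugate * (N * A)) p p := by
    intro p
    have hv : ∀ i : Fin n,
        ((n - 1 - i.val : ℕ) : ℝ) * c (m + p.val + 1 + i.val) = (N * A) i p := by
      intro i
      rw [Matrix.mul_apply]
      by_cases hi : i.val + 1 < n
      · rw [Finset.sum_eq_single (⟨i.val + 1, hi⟩ : Fin n)]
        · simp only [hN, hA, Matrix.of_apply, if_true]
          congr 2
          omega
        · intro k _ hk
          simp only [hN, Matrix.of_apply]
          rw [if_neg, zero_mul]
          intro h
          exact hk (Fin.ext h)
        · intro h; exact absurd (Finset.mem_univ _) h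
      · have h1 : n - 1 - i.val = 0 := by omega
        rw [h1]
        simp only [Nat.cast_zero, zero_mul]
        symm
        apply Finset.sum_eq_zero
        intro k _
        simp only [hN, Matrix.of_apply]
        rw [if_neg, zero_mul]
        have := k.isLt
        omega
    have hcol : (Matrix.of fun i q : Fin n =>
        if q = p then ((n - 1 - i.val : ℕ) : ℝ) * c (m + p.val + 1 + i.val)
        else c (m + q.val + i.val))
        = A.updateCol p (fun i => (N * A) i p) := by
      ext i q
      rw [Matrix.updateCol_apply, Matrix.of_apply]
      by_cases h : q = p
      · rw [if_pos h, if_pos h, hv]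
      · rw [if_neg h, if_neg h]; rfl
    rw [hcol, ← Matrix.cramer_apply, Matrix.cramer_eq_adjugate_mulVec]
    simp [Matrix.mulVec, Matrix.mul_apply, dotProduct, Finset.mul_sum, mul_assoc]
  calc (∑ p : Fin n,
      (Matrix.of fun i q : Fin n =>
        if q = p then ((n - 1 - i.val : ℕ) : ℝ) * c (m + p.val + 1 + i.val)
        else c (m + q.val + i.val)).det)
      = Matrix.trace (A.adjugate * (N * A)) := by
        rw [Matrix.trace]
        exact Finset.sum_congr rfl fun p _ => hterm p
    _ = Matrix.trace (A * A.adjugate * N) := by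
        rw [← Matrix.mul_assoc, Matrix.trace_mul_cycle]
    _ = 0 := by
        rw [Matrix.mul_adjugate, Matrix.smul_mul, one_mul, Matrix.trace_smul, Matrix.trace]
        have : ∀ i : Fin n, N i i = 0 := by
          intro i
          simp only [hN, Matrix.of_apply]
          rw [if_neg]; omega
        simp [this]
end

section
/- For m ∈ {0,1} and n ≥ 1, Σ_{j=m}^{n-1+m} det(A_m,…,A_{j-1}, A*_{j+2}, A_{j+1},…,A_{n-1+m}) = −F^m_n, with A*_j = ((n−1−i)c_{j+i})_{0≤i≤n-1} and F^m_n the determinant of the n×n matrix with rows (c_{m+k},…,c_{m+k+n-3}, c_{m+k+n-1}, c_{m+k+n}). -/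
/-- `Σ_{j=m}^{n-1+m} det(A_m,…,A*_{j+2},…,A_{n-1+m}) = −F^m_n`, where
`A*_j = ((n−1−i) c_{j+i})ᵢ`. -/
theorem sum_det_Astar_two (c : ℕ → ℝ) (m : ℕ) (hm : m = 0 ∨ m = 1) (n : ℕ) (hn : 1 ≤ n) :
    (∑ p : Fin n,
      (Matrix.of fun i q : Fin n =>
        if q = p then ((n - 1 - i.val : ℕ) : ℝ) * c (m + p.val + 2 + i.val)
        else c (m + q.val + i.val)).det) = - Fk c m n := by
  rcases eq_or_lt_of_le hn with h1 | hn2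
  · -- n = 1
    obtain rfl : n = 1 := h1.symm
    simp [Fk, Matrix.det_fin_one]
  · have hn2 : 2 ≤ n := hn2
    have hFk : Fk c m n = (Matrix.of fun i j : Fin n =>
        if n - 2 ≤ j.val then c (m + i.val + j.val + 1) else c (m + i.val + j.val)).det := by
      rw [Fk, if_neg (by omega)]
    set M : Matrix (Fin n) (Fin n) ℝ := Matrix.of fun i q : Fin n => c (m + q.val + i.val)
      with hM
    have hMsymm : M.transpose = M := by
      ext i q
      simp only [Matrix.transpose_apply, hM, Matrix.of_apply]
      congr 1
      omega
    have hAsymm : ∀ p k : Fin n, M.adjugate p k = M.adjugate k p := by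
      intro p k
      nth_rewrite 1 [← hMsymm]
      rw [← Matrix.adjugate_transpose]
      rfl
    set pn2 : Fin n := ⟨n - 2, by omega⟩ with hpn2
    set pn1 : Fin n := ⟨n - 1, by omega⟩ with hpn1
    have hne : pn1 ≠ pn2 := by
      simp only [hpn1, hpn2, ne_eq, Fin.mk.injEq]
      omega
    -- Cramer expansion
    have hg : ∀ p : Fin n, (∑ k : Fin n, M.adjugate p k * c (m + p.val + 2 + k.val))
        = (M.updateCol p fun i : Fin n => c (m + p.val + 2 + i.val)).det := by
      intro p
      rw [← Matrix.cramer_apply, Matrix.cramer_eq_adjugate_mulVec]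
      simp [Matrix.mulVec, dotProduct]
    -- Evaluation of the shifted determinants
    have hgval : ∀ p : Fin n,
        (M.updateCol p fun i : Fin n => c (m + p.val + 2 + i.val)).det
        = (if p = pn2 then - Fk c m n else 0) + (if p = pn1 then Ek c m n else 0) := by
      intro p
      by_cases hp1 : p = pn1
      · subst hp1
        rw [if_neg hne, if_pos rfl, zero_add, Ek]
        congr 1
        ext i q
        rw [Matrix.updateCol_apply, Matrix.of_apply]
        by_cases hq : q = pn1
        · rw [if_pos hq, if_pos (by rw [hq])]
          congr 1
          simp only [hpn1]
          omega
        · rw [if_neg hq, if_neg (by simpa [Fin.ext_iff, hpn1] using hq)]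
          simp only [hM, Matrix.of_apply]
          congr 1
          omega
      · by_cases hp2 : p = pn2
        · subst hp2
          rw [if_pos rfl, if_neg hp1, add_zero]
          have hswapcol : (M.updateCol pn2 fun i : Fin n => c (m + pn2.val + 2 + i.val))
              = (Matrix.of fun i j : Fin n =>
                  if n - 2 ≤ j.val then c (m + i.val + j.val + 1)
                  else c (m + i.val + j.val)).submatrix id (Equiv.swap pn2 pn1) := by
            ext i q
            rw [Matrix.updateCol_apply, Matrix.submatrix_apply, id_eq]
            by_cases hq2 : q = pn2
            · rw [if_pos hq2, hq2, Equiv.swap_apply_left, Matrix.of_apply,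
                if_pos (by simp only [hpn1]; omega)]
              congr 1
              simp only [hpn1, hpn2]
              omega
            · rw [if_neg hq2]
              by_cases hq1 : q = pn1
              · rw [hq1, Equiv.swap_apply_right, Matrix.of_apply, if_pos (by simp only [hpn2]; exact le_refl _)]
                simp only [hM, Matrix.of_apply, hpn1, hpn2]
                congr 1
                omega
              · rw [Equiv.swap_apply_of_ne_of_ne hq2 hq1, Matrix.of_apply,
                  if_neg (by
                    simp only [Fin.ext_iff, hpn1, hpn2] at hq1 hq2
                    omega)]
                simp only [hM, Matrix.of_apply]
                congr 1
                omega
          rw [hswapcol, Matrix.det_permute', Equiv.Perm.sign_swap (Ne.symm hne), hFk]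
          push_cast
          ring
        · rw [if_neg hp2, if_neg hp1, add_zero]
          have hplt : p.val + 2 < n := by
            have := p.isLt
            simp only [Fin.ext_iff, hpn1, hpn2] at hp1 hp2
            omega
          refine Matrix.det_zero_of_column_eq
            (show p ≠ (⟨p.val + 2, hplt⟩ : Fin n) by simp [Fin.ext_iff]) fun k => ?_
          rw [Matrix.updateCol_apply, Matrix.updateCol_apply, if_pos rfl,
            if_neg (by simp [Fin.ext_iff])]
          simp only [hM, Matrix.of_apply]
          congr 1 <;> omega
    -- rewrite the summands via updateColumn and Cramer
    have hsum1 : ∀ p : Fin n, (Matrix.of fun i q : Fin n =>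
        if q = p then ((n - 1 - i.val : ℕ) : ℝ) * c (m + p.val + 2 + i.val)
        else c (m + q.val + i.val)).det
        = ∑ k : Fin n, M.adjugate p k *
            (((n - 1 - k.val : ℕ) : ℝ) * c (m + p.val + 2 + k.val)) := by
      intro p
      have hmat : (Matrix.of fun i q : Fin n =>
          if q = p then ((n - 1 - i.val : ℕ) : ℝ) * c (m + p.val + 2 + i.val)
          else c (m + q.val + i.val))
          = M.updateCol p
              (fun i : Fin n => ((n - 1 - i.val : ℕ) : ℝ) * c (m + p.val + 2 + i.val)) := by
        ext i q
        rw [Matrix.updateCol_apply, Matrix.of_apply]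
        split_ifs <;> rfl
      rw [hmat, ← Matrix.cramer_apply, Matrix.cramer_eq_adjugate_mulVec]
      simp [Matrix.mulVec, dotProduct]
    have hw : ∀ k : Fin n, ((n - 1 - k.val : ℕ) : ℝ) = ((n - 1 : ℕ) : ℝ) - (k.val : ℝ) := by
      intro k
      have hk : k.val ≤ n - 1 := by omega
      rw [← Nat.cast_sub hk]
    calc (∑ p : Fin n,
        (Matrix.of fun i q : Fin n =>
          if q = p then ((n - 1 - i.val : ℕ) : ℝ) * c (m + p.val + 2 + i.val)
          else c (m + q.val + i.val)).det)
        = ∑ p : Fin n, ∑ k : Fin n,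
            (((n - 1 : ℕ) : ℝ) * (M.adjugate p k * c (m + p.val + 2 + k.val))
              - (k.val : ℝ) * (M.adjugate p k * c (m + p.val + 2 + k.val))) := by
          refine Finset.sum_congr rfl fun p _ => ?_
          rw [hsum1 p]
          refine Finset.sum_congr rfl fun k _ => ?_
          rw [hw k]
          ring
      _ = ((n - 1 : ℕ) : ℝ) * (∑ p : Fin n, ∑ k : Fin n,
              M.adjugate p k * c (m + p.val + 2 + k.val))
            - ∑ p : Fin n, ∑ k : Fin n,
              (k.val : ℝ) * (M.adjugate p k * c (m + p.val + 2 + k.val)) := by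
          rw [Finset.mul_sum]
          rw [← Finset.sum_sub_distrib]
          refine Finset.sum_congr rfl fun p _ => ?_
          rw [Finset.mul_sum, ← Finset.sum_sub_distrib]
      _ = ((n - 1 : ℕ) : ℝ) * (∑ p : Fin n, ∑ k : Fin n,
              M.adjugate p k * c (m + p.val + 2 + k.val))
            - ∑ p : Fin n, (p.val : ℝ) * ∑ k : Fin n,
              M.adjugate p k * c (m + p.val + 2 + k.val) := by
          congr 1
          rw [Finset.sum_comm]
          refine Finset.sum_congr rfl fun p _ => ?_
          rw [Finset.mul_sum]
          refine Finset.sum_congr rfl fun k _ => ?_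
          rw [hAsymm k p]
          have harg : m + k.val + 2 + p.val = m + p.val + 2 + k.val := by omega
          rw [harg]
      _ = ((n - 1 : ℕ) : ℝ) * (- Fk c m n + Ek c m n)
            - (((n - 2 : ℕ) : ℝ) * (- Fk c m n) + ((n - 1 : ℕ) : ℝ) * Ek c m n) := by
          congr 1
          · congr 1
            rw [Finset.sum_congr rfl fun p _ => (hg p).trans (hgval p)]
            rw [Finset.sum_add_distrib]
            simp [Finset.sum_ite_eq']
          · rw [Finset.sum_congr rfl fun p _ => by rw [hg p, hgval p]]
            have : ∀ p : Fin n, (p.val : ℝ) *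
                ((if p = pn2 then - Fk c m n else 0) + (if p = pn1 then Ek c m n else 0))
                = (if p = pn2 then ((n - 2 : ℕ) : ℝ) * (- Fk c m n) else 0)
                  + (if p = pn1 then ((n - 1 : ℕ) : ℝ) * Ek c m n else 0) := by
              intro p
              split_ifs with h2 h1 h1
              · exact absurd (h1.symm.trans h2) hne
              · subst h2; simp [hpn2]
              · subst h1; simp [hpn1]
              · simp
            rw [Finset.sum_congr rfl fun p _ => this p, Finset.sum_add_distrib]
            simp [Finset.sum_ite_eq']
      _ = - Fk c m n := by
          have e1 : ((n - 1 : ℕ) : ℝ) = (n : ℝ) - 1 := by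
            rw [Nat.cast_sub (by omega)]; norm_num
          have e2 : ((n - 2 : ℕ) : ℝ) = (n : ℝ) - 2 := by
            rw [Nat.cast_sub (by omega)]; norm_num
          rw [e1, e2]
          ring
end

section
/- If the sequence c : ℝ → (ℕ → ℝ) satisfies the linear system dc_j/dt = c_{j+1} for all j, then for m ∈ {0,1} the Hankel determinants satisfy d(H^m_n)/dt = G^m_n, where G^m_n is H^m_n with the last row shifted forward by one index. -/
/-- Time-dependent Hankel determinant `H^m_n(t) = det(c_{i+j+m}(t))`. -/
noncomputable def Hf (c : ℕ → ℝ → ℝ) (m n : ℕ) (t : ℝ) : ℝ :=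
  (Matrix.of fun i j : Fin n => c (i.val + j.val + m) t).det

/-- `G^m_n(t)`: the Hankel determinant `H^m_n(t)` with its last row shifted
forward by one index; by convention `G^m_0 = 0`. -/
noncomputable def Gf (c : ℕ → ℝ → ℝ) (m n : ℕ) (t : ℝ) : ℝ :=
  if n = 0 then 0 else
  (Matrix.of fun i j : Fin n =>
    if i.val = n - 1 then c (m + n + j.val) t else c (i.val + j.val + m) t).det

/-!
The derivative of a determinant is the sum over `j` of the determinants with the `j`-th column
differentiated. Differentiating column `j` of the Hankel matrix `(c_{i+j+m})` produces its
column `j + 1`, so every term but the last has a repeated column and vanishes. Since a Hankel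
matrix is symmetric, the last term equals the determinant with the last row shifted, i.e. `G^m_n`.
-/

namespace Matrix

theorem hasDerivAt_det {𝕜 𝔸 ι : Type*} [NontriviallyNormedField 𝕜] [NormedCommRing 𝔸]
    [NormedAlgebra 𝕜 𝔸] [Fintype ι] [DecidableEq ι] {A : 𝕜 → Matrix ι ι 𝔸}
    {A' : Matrix ι ι 𝔸} {t : 𝕜} (hA : ∀ i j, HasDerivAt (fun s => A s i j) (A' i j) t) :
    HasDerivAt (fun s => (A s).det) (∑ j, ((A t).updateCol j fun i => A' i j).det) t := by
  have hσ (σ : Equiv.Perm ι) :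
      HasDerivAt (fun s => (Equiv.Perm.sign σ : 𝔸) * ∏ i, A s (σ i) i)
        ((Equiv.Perm.sign σ : 𝔸) * ∑ j, (∏ i ∈ Finset.univ.erase j, A t (σ i) i) • A' (σ j) j)
        t :=
    (HasDerivAt.fun_finsetProd fun i _ => hA (σ i) i).const_mul _
  simp_rw [det_apply']
  refine (HasDerivAt.fun_sum (u := Finset.univ) fun σ _ => hσ σ).congr_deriv ?_
  simp_rw [Finset.mul_sum]
  rw [Finset.sum_comm]
  refine Finset.sum_congr rfl fun j _ => Finset.sum_congr rfl fun σ _ => ?_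
  rw [← Finset.mul_prod_erase _ _ (Finset.mem_univ j), smul_eq_mul, mul_comm (∏ _ ∈ _, _)]
  congr 2
  · rw [updateCol_self]
  · refine Finset.prod_congr rfl fun i hi => ?_
    rw [updateCol_ne (Finset.ne_of_mem_erase hi)]

theorem IsSymm.det_updateCol {R ι : Type*} [CommRing R] [Fintype ι] [DecidableEq ι]
    {A : Matrix ι ι R} (hA : A.IsSymm) (j : ι) (v : ι → R) :
    (A.updateCol j v).det = (A.updateRow j v).det := by
  rw [← det_transpose, ← updateRow_transpose, hA]

def hankel_s15 {R : Type*} (n : ℕ) (a : ℕ → R) : Matrix (Fin n) (Fin n) R :=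
  of fun i j => a (i + j)

section Hankel

variable {R : Type*} {n : ℕ} (a : ℕ → R)

theorem isSymm_hankel : (hankel_s15 n a).IsSymm :=
  ext fun i j => by simp [hankel_s15, add_comm]

theorem det_hankel_updateCol_shift_eq_zero [CommRing R] {j : Fin n} (hj : j.val + 1 < n) :
    ((hankel_s15 n a).updateCol j fun i => a (i + j + 1)).det = 0 :=
  det_updateCol_eq_zero (M := hankel_s15 n a) (i := ⟨j + 1, hj⟩) (j := j) (by simp [Fin.ext_iff])

end Hankel

end Matrix

open Matrix in
theorem deriv_hankel_linear_general (c : ℕ → ℝ → ℝ)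
    (hc : ∀ j t, HasDerivAt (c j) (c (j + 1) t) t)
    (m : ℕ) (n : ℕ) (hn : 1 ≤ n) (t : ℝ) :
    HasDerivAt (fun s => Hf c m n s) (Gf c m n t) t := by
  set a : ℕ → ℝ := fun k => c (k + m) t
  let last : Fin n := ⟨n - 1, by omega⟩
  have hH : HasDerivAt (fun s => Hf c m n s)
      (∑ j, ((hankel_s15 n a).updateCol j fun i => a (i + j + 1)).det) t :=
    hasDerivAt_det (A := fun s => hankel_s15 n fun k => c (k + m) s) fun i j => by
      simpa only [hankel_s15, of_apply, a, add_right_comm _ 1 m] using hc (i + j + m) t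
  have hsum : ∑ j, ((hankel_s15 n a).updateCol j fun i => a (i + j + 1)).det
      = ((hankel_s15 n a).updateCol last fun i => a (i + last + 1)).det := by
    refine Finset.sum_eq_single last (fun j _ hj => ?_) (by simp)
    refine det_hankel_updateCol_shift_eq_zero a ?_
    have : j.val ≠ n - 1 := fun h => hj (Fin.ext h)
    omega
  have hG : Gf c m n t = ((hankel_s15 n a).updateRow last fun j => a (j + last + 1)).det := by
    rw [Gf, if_neg (by omega)]
    congr 1
    ext i j
    by_cases hi : i = last
    · simp only [hi, updateRow_self, of_apply, last, if_true, a]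
      congr 1
      omega
    · have : i.val ≠ n - 1 := fun h => hi (Fin.ext h)
      simp [updateRow_ne hi, this, hankel_s15, a]
  rwa [hG, ← (isSymm_hankel a).det_updateCol, ← hsum]

/-- If `c_j' = c_{j+1}` for all `j`, then `(H^m_n)' = G^m_n` for `m ∈ {0,1}`, `n ≥ 1`. -/
theorem deriv_hankel_linear (c : ℕ → ℝ → ℝ)
    (hc : ∀ j t, HasDerivAt (c j) (c (j + 1) t) t)
    (m : ℕ) (hm : m = 0 ∨ m = 1) (n : ℕ) (hn : 1 ≤ n) (t : ℝ) :
    HasDerivAt (fun s => Hf c m n s) (Gf c m n t) t :=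
  deriv_hankel_linear_general c hc m n hn t
end
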